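/- arXiv:2108.08780 — 12 statements merged into one kernel-verified Lean document; each statement's English description precedes it below -/
import Mathlib

section
/- Let p* be a minimizer of the classification error E over all feasible calibrations. Then p*_1 = 0, p*_N = 1, and for every index n with 2 ≤ n ≤ N−1: if y_n = 1 then p*_n = p*_{n+1}, and if y_n = 0 then p*_n = p*_{n−1}. -/
/-- A feasible calibration: a nondecreasing vector `p 1, …, p N` with values in `[0,1]`. -/
def Feasible (N : ℕ) (p : ℕ → ℝ) : Prop :=
  0 ≤ p 1 ∧ p N ≤ 1 ∧ ∀ n, 1 ≤ n → n < N → p n ≤ p (n + 1)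

/-- The classification error `E(p) = Σ_{n=1}^N [y_n (1 - p_n) + (1 - y_n) p_n]`. -/
def clErr (N : ℕ) (y p : ℕ → ℝ) : ℝ :=
  ∑ n ∈ Finset.Icc 1 N, (y n * (1 - p n) + (1 - y n) * p n)

lemma mono_of (N : ℕ) (p : ℕ → ℝ)
    (hp : ∀ n, 1 ≤ n → n < N → p n ≤ p (n + 1)) :
    ∀ a b, 1 ≤ a → a ≤ b → b ≤ N → p a ≤ p b := by
  intro a b ha hab
  induction b, hab using Nat.le_induction with
  | base => intro _; exact le_refl _
  | succ b hb ih =>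
    intro hbN
    exact le_trans (ih (by omega)) (hp b (by omega) (by omega))

lemma clErr_update (N : ℕ) (y p : ℕ → ℝ) (n : ℕ) (hn : n ∈ Finset.Icc 1 N) (v : ℝ) :
    clErr N y (Function.update p n v) =
      clErr N y p + ((y n * (1 - v) + (1 - y n) * v)
        - (y n * (1 - p n) + (1 - y n) * p n)) := by
  unfold clErr
  rw [← Finset.add_sum_erase _ _ hn, ← Finset.add_sum_erase _ _ hn]
  have h1 : ∀ m ∈ (Finset.Icc 1 N).erase n,
      (y m * (1 - Function.update p n v m) + (1 - y m) * Function.update p n v m)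
        = (y m * (1 - p m) + (1 - y m) * p m) := by
    intro m hm
    rw [Function.update_of_ne (Finset.ne_of_mem_erase hm)]
  rw [Finset.sum_congr rfl h1, Function.update_self]
  ring

theorem stmt0 (N : ℕ) (hN : 2 ≤ N) (y : ℕ → ℝ)
    (hy : ∀ n ∈ Finset.Icc 1 N, y n = 0 ∨ y n = 1)
    (hy1 : y 1 = 0) (hyN : y N = 1)
    (p : ℕ → ℝ) (hp : Feasible N p)
    (hmin : ∀ q, Feasible N q → clErr N y p ≤ clErr N y q) :
    p 1 = 0 ∧ p N = 1 ∧
      ∀ n, 2 ≤ n → n ≤ N - 1 →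
        (y n = 1 → p n = p (n + 1)) ∧ (y n = 0 → p n = p (n - 1)) := by
  obtain ⟨h0, h1N, hmono⟩ := hp
  have hmono' := mono_of N p hmono
  refine ⟨?_, ?_, ?_⟩
  · -- p 1 = 0
    by_contra h
    have hpos : 0 < p 1 := lt_of_le_of_ne h0 (Ne.symm h)
    set q := Function.update p 1 0 with hq
    have hfeas : Feasible N q := by
      refine ⟨by simp [hq], ?_, ?_⟩
      · rw [hq, Function.update_of_ne (by omega)]; exact h1N
      · intro m hm1 hmN
        by_cases hm : m = 1
        · subst hm
          rw [hq, Function.update_self, Function.update_of_ne (by omega)]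
          exact le_trans h0 (hmono 1 (by omega) (by omega))
        · rw [hq, Function.update_of_ne hm, Function.update_of_ne (by omega)]
          exact hmono m hm1 hmN
    have := hmin q hfeas
    rw [hq, clErr_update N y p 1 (by simp; omega) 0] at this
    rw [hy1] at this
    nlinarith
  · -- p N = 1
    by_contra h
    have hlt : p N < 1 := lt_of_le_of_ne h1N h
    set q := Function.update p N 1 with hq
    have hfeas : Feasible N q := by
      refine ⟨?_, by simp [hq], ?_⟩
      · rw [hq, Function.update_of_ne (by omega)]; exact h0
      · intro m hm1 hmN
        by_cases hm : m + 1 = N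
        · rw [hq, hm, Function.update_self, Function.update_of_ne (by omega)]
          exact le_trans (hmono' m N hm1 (by omega) (le_refl N)) h1N
        · rw [hq, Function.update_of_ne (by omega), Function.update_of_ne hm]
          exact hmono m hm1 hmN
    have := hmin q hfeas
    rw [hq, clErr_update N y p N (by simp; omega) 1] at this
    rw [hyN] at this
    nlinarith
  · intro n hn2 hnN1
    have hnN : n + 1 ≤ N := by omega
    constructor
    · -- y n = 1 → p n = p (n+1)
      intro hyn
      by_contra h
      have hlt : p n < p (n + 1) :=
        lt_of_le_of_ne (hmono n (by omega) (by omega)) h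
      set q := Function.update p n (p (n + 1)) with hq
      have hfeas : Feasible N q := by
        refine ⟨?_, ?_, ?_⟩
        · rw [hq, Function.update_of_ne (by omega)]; exact h0
        · rw [hq, Function.update_of_ne (by omega)]; exact h1N
        · intro m hm1 hmN
          by_cases hm : m = n
          · subst hm
            rw [hq, Function.update_self, Function.update_of_ne (by omega)]
          · by_cases hm' : m + 1 = n
            · rw [hq, Function.update_of_ne hm, hm', Function.update_self]
              exact hmono' m (n + 1) hm1 (by omega) hnN
            · rw [hq, Function.update_of_ne hm, Function.update_of_ne (by omega)]
              exact hmono m hm1 hmN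
      have := hmin q hfeas
      rw [hq, clErr_update N y p n (by simp; omega) (p (n + 1))] at this
      rw [hyn] at this
      nlinarith
    · -- y n = 0 → p n = p (n-1)
      intro hyn
      by_contra h
      have hle : p (n - 1) ≤ p n := by
        have := hmono (n - 1) (by omega) (by omega)
        have heq : n - 1 + 1 = n := by omega
        rwa [heq] at this
      have hlt : p (n - 1) < p n := lt_of_le_of_ne hle (fun e => h e.symm)
      set q := Function.update p n (p (n - 1)) with hq
      have hfeas : Feasible N q := by
        refine ⟨?_, ?_, ?_⟩
        · rw [hq, Function.update_of_ne (by omega)]; exact h0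
        · rw [hq, Function.update_of_ne (by omega)]; exact h1N
        · intro m hm1 hmN
          by_cases hm : m = n
          · rw [hm, hq, Function.update_self, Function.update_of_ne (by omega)]
            exact le_trans hle (hmono n (by omega) (by omega))
          · by_cases hm' : m + 1 = n
            · rw [hq, Function.update_of_ne hm, hm', Function.update_self]
              have : m = n - 1 := by omega
              rw [this]
            · rw [hq, Function.update_of_ne hm, Function.update_of_ne (by omega)]
              exact hmono m hm1 hmN
      have := hmin q hfeas
      rw [hq, clErr_update N y p n (by simp; omega) (p (n - 1))] at this
      rw [hyn] at this
      nlinarith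
end

section
/- Let p* be a minimizer of the classification error E over all feasible calibrations, and let 0 = n_1 < n_2 < … < n_{I+1} = N be a block decomposition of p* with block values v_1 ≤ … ≤ v_I. Then for every interior block i ∈ {2,…,I−1}: if Σ_{n=n_i+1}^{n_{i+1}} y_n > (n_{i+1}−n_i)/2 then v_i = v_{i+1}, and if Σ_{n=n_i+1}^{n_{i+1}} y_n < (n_{i+1}−n_i)/2 then v_i = v_{i−1}. Moreover v_1 = 0 and v_I = 1. -/
/-- A block decomposition of `p`: boundary indices `0 = nI 1 < nI 2 < … < nI (I+1) = N`
such that `p` is constant, equal to `v i`, on each block `{nI i + 1, …, nI (i+1)}`. -/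
def BlockDecomp (N I : ℕ) (p : ℕ → ℝ) (nI : ℕ → ℕ) (v : ℕ → ℝ) : Prop :=
  nI 1 = 0 ∧ nI (I + 1) = N ∧ (∀ i, 1 ≤ i → i ≤ I → nI i < nI (i + 1)) ∧
    ∀ i, 1 ≤ i → i ≤ I → ∀ n, nI i + 1 ≤ n → n ≤ nI (i + 1) → p n = v i

lemma clErr_diff (N : ℕ) (y p q : ℕ → ℝ) :
    clErr N y q - clErr N y p = ∑ n ∈ Finset.Icc 1 N, (1 - 2 * y n) * (q n - p n) := by
  unfold clErr
  rw [← Finset.sum_sub_distrib]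
  exact Finset.sum_congr rfl fun n _ => by ring

lemma first_zero (N : ℕ) (hN : 2 ≤ N) (y p : ℕ → ℝ) (hy1 : y 1 = 0)
    (hp : Feasible N p)
    (hmin : ∀ q, Feasible N q → clErr N y p ≤ clErr N y q) : p 1 = 0 := by
  obtain ⟨hp0, hpN, hps⟩ := hp
  set q : ℕ → ℝ := fun n => if n = 1 then 0 else p n with hq
  have hfeas : Feasible N q := by
    refine ⟨by simp [hq], ?_, ?_⟩
    · simp only [hq]
      rw [if_neg (by omega)]
      exact hpN
    · intro n hn1 hnN
      simp only [hq]
      by_cases h : n = 1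
      · rw [if_pos h, if_neg (by omega)]
        have h2 := hps 1 le_rfl (by omega)
        subst h
        linarith
      · rw [if_neg h, if_neg (by omega)]
        exact hps n hn1 hnN
  have hle := hmin q hfeas
  have hd := clErr_diff N y p q
  have hsum : ∑ n ∈ Finset.Icc 1 N, (1 - 2 * y n) * (q n - p n) = -(p 1) := by
    rw [Finset.sum_eq_single_of_mem 1 (by simp [Finset.mem_Icc]; omega)]
    · simp only [hq, if_pos rfl, hy1]; ring
    · intro b _ hb
      have : q b = p b := by simp only [hq]; rw [if_neg hb]
      rw [this]; ring
  linarith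

lemma last_one (N : ℕ) (hN : 2 ≤ N) (y p : ℕ → ℝ) (hyN : y N = 1)
    (hp : Feasible N p)
    (hmin : ∀ q, Feasible N q → clErr N y p ≤ clErr N y q) : p N = 1 := by
  obtain ⟨hp0, hpN, hps⟩ := hp
  set q : ℕ → ℝ := fun n => if n = N then 1 else p n with hq
  have hfeas : Feasible N q := by
    refine ⟨?_, ?_, ?_⟩
    · simp only [hq]
      rw [if_neg (by omega)]
      exact hp0
    · simp only [hq, if_true, eq_self_iff_true]
      exact le_rfl
    · intro n hn1 hnN
      simp only [hq]
      by_cases h : n + 1 = N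
      · rw [if_neg (by omega), if_pos h]
        have h2 := hps n hn1 hnN
        have : n + 1 = N := h
        rw [this] at h2
        linarith
      · rw [if_neg (by omega), if_neg h]
        exact hps n hn1 hnN
  have hle := hmin q hfeas
  have hd := clErr_diff N y p q
  have hsum : ∑ n ∈ Finset.Icc 1 N, (1 - 2 * y n) * (q n - p n) = -(1 - p N) := by
    rw [Finset.sum_eq_single_of_mem N (by simp [Finset.mem_Icc]; omega)]
    · simp only [hq, if_pos rfl, hyN]; ring
    · intro b _ hb
      have : q b = p b := by simp only [hq]; rw [if_neg hb]
      rw [this]; ring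
  linarith

/-- Perturbing one interior block to a value `w` between the neighboring block values. -/
lemma key_ineq (N : ℕ) (y p : ℕ → ℝ) (hp : Feasible N p)
    (hmin : ∀ q, Feasible N q → clErr N y p ≤ clErr N y q)
    (a b : ℕ) (ha : 1 ≤ a) (hab : a < b) (hbN : b < N)
    (vi w wl wr : ℝ)
    (hpa : p a = wl) (hpb1 : p (b + 1) = wr)
    (hpblock : ∀ n, a + 1 ≤ n → n ≤ b → p n = vi)
    (hw1 : wl ≤ w) (hw2 : w ≤ wr) :
    0 ≤ (w - vi) * (((b : ℝ) - (a : ℝ)) - 2 * ∑ n ∈ Finset.Icc (a + 1) b, y n) := by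
  obtain ⟨hp0, hpN, hps⟩ := hp
  set q : ℕ → ℝ := fun n => if a + 1 ≤ n ∧ n ≤ b then w else p n with hq
  have hfeas : Feasible N q := by
    refine ⟨?_, ?_, ?_⟩
    · simp only [hq]
      rw [if_neg (by omega)]
      exact hp0
    · simp only [hq]
      rw [if_neg (by omega)]
      exact hpN
    · intro n hn1 hnN
      simp only [hq]
      by_cases h1 : a + 1 ≤ n ∧ n ≤ b
      · by_cases h2 : n + 1 ≤ b
        · rw [if_pos h1, if_pos ⟨by omega, h2⟩]
        · have hnb : n = b := by omega
          rw [if_pos h1, if_neg (by omega)]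
          have : p (n + 1) = wr := by rw [hnb]; exact hpb1
          linarith
      · by_cases h2 : a + 1 ≤ n + 1 ∧ n + 1 ≤ b
        · have hna : n = a := by omega
          rw [if_neg h1, if_pos h2]
          have : p n = wl := by rw [hna]; exact hpa
          linarith
        · rw [if_neg h1, if_neg h2]
          exact hps n hn1 hnN
  have hle := hmin q hfeas
  have hd := clErr_diff N y p q
  have hsub : Finset.Icc (a + 1) b ⊆ Finset.Icc 1 N := by
    intro x hx
    simp only [Finset.mem_Icc] at *
    omega
  have hzero : ∀ x ∈ Finset.Icc 1 N, x ∉ Finset.Icc (a + 1) b →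
      (1 - 2 * y x) * (q x - p x) = 0 := by
    intro x _ hx
    simp only [Finset.mem_Icc] at hx
    have : q x = p x := by simp only [hq]; rw [if_neg hx]
    rw [this]; ring
  have hsum : ∑ n ∈ Finset.Icc 1 N, (1 - 2 * y n) * (q n - p n)
      = (w - vi) * (((b : ℝ) - (a : ℝ)) - 2 * ∑ n ∈ Finset.Icc (a + 1) b, y n) := by
    rw [← Finset.sum_subset hsub hzero]
    have hcong : ∀ n ∈ Finset.Icc (a + 1) b,
        (1 - 2 * y n) * (q n - p n) = (w - vi) * (1 - 2 * y n) := by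
      intro n hn
      simp only [Finset.mem_Icc] at hn
      have h1 : q n = w := by simp only [hq]; rw [if_pos hn]
      have h2 : p n = vi := hpblock n hn.1 hn.2
      rw [h1, h2]; ring
    rw [Finset.sum_congr rfl hcong, ← Finset.mul_sum]
    congr 1
    rw [Finset.sum_sub_distrib, Finset.sum_const, ← Finset.mul_sum, Nat.card_Icc]
    have : ((b + 1 - (a + 1) : ℕ) : ℝ) = (b : ℝ) - (a : ℝ) := by
      rw [Nat.cast_sub (by omega)]
      push_cast
      ring
    rw [nsmul_eq_mul, this]
    ring
  linarith

theorem stmt1 (N : ℕ) (hN : 2 ≤ N) (y : ℕ → ℝ)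
    (hy : ∀ n ∈ Finset.Icc 1 N, y n = 0 ∨ y n = 1)
    (hy1 : y 1 = 0) (hyN : y N = 1)
    (p : ℕ → ℝ) (hp : Feasible N p)
    (hmin : ∀ q, Feasible N q → clErr N y p ≤ clErr N y q)
    (I : ℕ) (hI : 1 ≤ I) (nI : ℕ → ℕ) (v : ℕ → ℝ)
    (hblock : BlockDecomp N I p nI v) :
    (∀ i, 2 ≤ i → i ≤ I - 1 →
      ((∑ n ∈ Finset.Icc (nI i + 1) (nI (i + 1)), y n) >
          ((nI (i + 1) : ℝ) - (nI i : ℝ)) / 2 → v i = v (i + 1)) ∧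
      ((∑ n ∈ Finset.Icc (nI i + 1) (nI (i + 1)), y n) <
          ((nI (i + 1) : ℝ) - (nI i : ℝ)) / 2 → v i = v (i - 1))) ∧
    v 1 = 0 ∧ v I = 1 := by
  obtain ⟨hn1, hnN, hlt, hconst⟩ := hblock
  have hmono : ∀ k j, 1 ≤ j → j ≤ k → k ≤ I + 1 → nI j ≤ nI k := by
    intro k
    induction k with
    | zero => intro j hj hjk _; omega
    | succ m ih =>
      intro j hj hjk hk
      rcases Nat.lt_or_ge j (m + 1) with h | h
      · have h1 : nI j ≤ nI m := ih j hj (by omega) (by omega)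
        have h2 : nI m < nI (m + 1) := hlt m (by omega) (by omega)
        omega
      · have : j = m + 1 := by omega
        rw [this]
  refine ⟨?_, ?_, ?_⟩
  · intro i h2i hiI
    have hI3 : 3 ≤ I := by omega
    have hi1I : i + 1 ≤ I := by omega
    have ha1 : 1 ≤ nI i := by
      have h1 : nI 1 < nI 2 := hlt 1 le_rfl (by omega)
      have h2 : nI 2 ≤ nI i := hmono i 2 (by omega) h2i (by omega)
      omega
    have hab : nI i < nI (i + 1) := hlt i (by omega) (by omega)
    have hbN : nI (i + 1) < N := by
      have h1 : nI (i + 1) ≤ nI I := hmono I (i + 1) (by omega) hi1I (by omega)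
      have h2 : nI I < nI (I + 1) := hlt I hI le_rfl
      omega
    -- neighboring block values
    have hpa : p (nI i) = v (i - 1) := by
      have hi1 : i - 1 + 1 = i := by omega
      have hlt' : nI (i - 1) < nI i := by
        have := hlt (i - 1) (by omega) (by omega)
        rwa [hi1] at this
      have := hconst (i - 1) (by omega) (by omega) (nI i) (by omega) (by rw [hi1])
      exact this
    have hpb1 : p (nI (i + 1) + 1) = v (i + 1) := by
      have hlt' : nI (i + 1) < nI (i + 1 + 1) := hlt (i + 1) (by omega) (by omega)
      exact hconst (i + 1) (by omega) (by omega) (nI (i + 1) + 1) le_rfl (by omega)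
    have hpblock : ∀ n, nI i + 1 ≤ n → n ≤ nI (i + 1) → p n = v i :=
      fun n h1 h2 => hconst i (by omega) (by omega) n h1 h2
    have hvle1 : v (i - 1) ≤ v i := by
      have h1 : p (nI i) ≤ p (nI i + 1) := hp.2.2 (nI i) ha1 (by omega)
      have h2 : p (nI i + 1) = v i := hpblock (nI i + 1) le_rfl (by omega)
      rw [hpa, h2] at h1
      exact h1
    have hvle2 : v i ≤ v (i + 1) := by
      have h1 : p (nI (i + 1)) ≤ p (nI (i + 1) + 1) := hp.2.2 (nI (i + 1)) (by omega) hbN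
      have h2 : p (nI (i + 1)) = v i := hpblock (nI (i + 1)) (by omega) le_rfl
      rw [hpb1, h2] at h1
      exact h1
    constructor
    · intro hS
      have hk := key_ineq N y p hp hmin (nI i) (nI (i + 1)) ha1 hab hbN
        (v i) (v (i + 1)) (v (i - 1)) (v (i + 1)) hpa hpb1 hpblock
        (le_trans hvle1 hvle2) le_rfl
      nlinarith [hk, hvle2, hS]
    · intro hS
      have hk := key_ineq N y p hp hmin (nI i) (nI (i + 1)) ha1 hab hbN
        (v i) (v (i - 1)) (v (i - 1)) (v (i + 1)) hpa hpb1 hpblock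
        le_rfl (le_trans hvle1 hvle2)
      nlinarith [hk, hvle1, hS]
  · have hp1 : p 1 = 0 := first_zero N hN y p hy1 hp hmin
    have h2 : nI 1 < nI (1 + 1) := hlt 1 le_rfl hI
    have := hconst 1 le_rfl hI 1 (by omega) (by omega)
    rw [hp1] at this
    exact this.symm
  · have hpN : p N = 1 := last_one N hN y p hyN hp hmin
    have h2 : nI I < nI (I + 1) := hlt I hI le_rfl
    have := hconst I hI le_rfl N (by omega) (by omega)
    rw [hpN] at this
    exact this.symm
end

section
/- Let p* be a minimizer of the classification error E over all feasible calibrations, and let 0 = n_1 < n_2 < … < n_{I+1} = N be its maximal block decomposition (pairwise distinct block values v_1 < … < v_I). Then every interior block i ∈ {2,…,I−1} contains exactly half targets equal to one, i.e. Σ_{n=n_i+1}^{n_{i+1}} y_n = (n_{i+1}−n_i)/2; the first block has strictly fewer than half targets equal to one, Σ_{n=1}^{n_2} y_n < n_2/2; and the last block has strictly more than half targets equal to one, Σ_{n=n_I+1}^{N} y_n > (N−n_I)/2. -/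
private lemma feas_if (N a b : ℕ) (p : ℕ → ℝ) (ε : ℝ) (hp : Feasible N p)
    (ha : 1 ≤ a) (hb : b ≤ N)
    (h1 : 1 < a ∨ 0 ≤ p 1 + ε)
    (hNc : b < N ∨ p N + ε ≤ 1)
    (hleft : a = 1 ∨ p (a - 1) ≤ p a + ε)
    (hright : b = N ∨ p b + ε ≤ p (b + 1)) :
    Feasible N (fun n => if a ≤ n ∧ n ≤ b then p n + ε else p n) := by
  obtain ⟨hp0, hpN, hm⟩ := hp
  refine ⟨?_, ?_, ?_⟩
  · dsimp only
    split_ifs with h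
    · rcases h1 with h1 | h1
      · omega
      · exact h1
    · exact hp0
  · dsimp only
    split_ifs with h
    · rcases hNc with hNc | hNc
      · omega
      · exact hNc
    · exact hpN
  · intro n hn1 hnN
    dsimp only
    split_ifs with hA hB hB
    · have := hm n hn1 hnN; linarith
    · -- n in, n+1 out: n = b
      have hbn : b = n := by omega
      subst hbn
      rcases hright with h | h
      · omega
      · exact h
    · -- n out, n+1 in: a = n+1
      have han : a = n + 1 := by omega
      subst han
      rcases hleft with h | h
      · omega
      · simpa using h
    · exact hm n hn1 hnN

private lemma pert (N : ℕ) (y p : ℕ → ℝ)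
    (hmin : ∀ q, Feasible N q → clErr N y p ≤ clErr N y q)
    (a b : ℕ) (ε : ℝ) (ha : 1 ≤ a) (hb : b ≤ N)
    (hfeas : Feasible N (fun n => if a ≤ n ∧ n ≤ b then p n + ε else p n)) :
    0 ≤ (∑ n ∈ Finset.Icc a b, (1 - 2 * y n)) * ε := by
  have h := hmin _ hfeas
  have h3 : (∑ n ∈ Finset.Icc a b, (1 - 2 * y n)) * ε
      = ∑ n ∈ Finset.Icc 1 N, (if a ≤ n ∧ n ≤ b then (1 - 2 * y n) * ε else 0) := by
    rw [Finset.sum_mul]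
    rw [show (∑ n ∈ Finset.Icc a b, (1 - 2 * y n) * ε)
        = ∑ n ∈ Finset.Icc a b, (if a ≤ n ∧ n ≤ b then (1 - 2 * y n) * ε else 0) from
      Finset.sum_congr rfl (fun n hn => by
        simp only [Finset.mem_Icc] at hn; rw [if_pos hn])]
    apply Finset.sum_subset (Finset.Icc_subset_Icc ha hb)
    intro x hx hx'
    simp only [Finset.mem_Icc] at hx'
    rw [if_neg hx']
  have h2 : clErr N y (fun n => if a ≤ n ∧ n ≤ b then p n + ε else p n)
      = clErr N y p + (∑ n ∈ Finset.Icc a b, (1 - 2 * y n)) * ε := by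
    rw [h3]
    unfold clErr
    rw [← Finset.sum_add_distrib]
    apply Finset.sum_congr rfl
    intro n hn
    dsimp only
    split_ifs with hc
    · ring
    · ring
  rw [h2] at h
  linarith

theorem stmt2 (N : ℕ) (hN : 2 ≤ N) (y : ℕ → ℝ)
    (hy : ∀ n ∈ Finset.Icc 1 N, y n = 0 ∨ y n = 1)
    (hy1 : y 1 = 0) (hyN : y N = 1)
    (p : ℕ → ℝ) (hp : Feasible N p)
    (hmin : ∀ q, Feasible N q → clErr N y p ≤ clErr N y q)
    (I : ℕ) (hI : 1 ≤ I) (nI : ℕ → ℕ) (v : ℕ → ℝ)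
    (hblock : BlockDecomp N I p nI v)
    (hmax : ∀ i j, 1 ≤ i → i < j → j ≤ I → v i < v j) :
    (∀ i, 2 ≤ i → i ≤ I - 1 →
      (∑ n ∈ Finset.Icc (nI i + 1) (nI (i + 1)), y n) =
        ((nI (i + 1) : ℝ) - (nI i : ℝ)) / 2) ∧
    (∑ n ∈ Finset.Icc 1 (nI 2), y n) < (nI 2 : ℝ) / 2 ∧
    (∑ n ∈ Finset.Icc (nI I + 1) N, y n) > ((N : ℝ) - (nI I : ℝ)) / 2 := by
  have hfp := hp
  obtain ⟨hn1, hnN, hninc, hpv⟩ := hblock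
  obtain ⟨hp0, hpN1, hm⟩ := hp
  -- strict monotonicity of nI boundaries
  have hnIlt : ∀ j i, 1 ≤ i → i < j → j ≤ I + 1 → nI i < nI j := by
    intro j
    induction j with
    | zero => intro i _ h _; omega
    | succ j ih =>
      intro i hi hij hj
      rcases Nat.lt_or_ge i j with h | h
      · exact lt_trans (ih i hi h (by omega)) (hninc j (by omega) (by omega))
      · have hh : i = j := by omega
        subst hh
        exact hninc i hi (by omega)
  have hnIle : ∀ j i, 1 ≤ i → i ≤ j → j ≤ I + 1 → nI i ≤ nI j := by
    intro j i h1 h2 h3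
    rcases eq_or_lt_of_le h2 with h | h
    · rw [h]
    · exact le_of_lt (hnIlt j i h1 h h3)
  have h12 : nI 1 < nI 2 := hninc 1 le_rfl hI
  have hnI2pos : 1 ≤ nI 2 := by omega
  have hIlt : nI I < N := by have := hninc I hI le_rfl; omega
  -- p 1 = 0
  have hfe1 : Feasible N (fun n => if 1 ≤ n ∧ n ≤ 1 then p n + (-p 1) else p n) := by
    apply feas_if N 1 1 p (-p 1) hfp le_rfl (by omega)
    · exact Or.inr (by linarith)
    · exact Or.inl (by omega)
    · exact Or.inl rfl
    · refine Or.inr ?_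
      have := hm 1 le_rfl (by omega)
      linarith
  have h01 := pert N y p hmin 1 1 (-p 1) le_rfl (by omega) hfe1
  have hsum1 : ∑ n ∈ Finset.Icc 1 1, (1 - 2 * y n) = 1 := by simp [hy1]
  rw [hsum1] at h01
  have hp1 : p 1 = 0 := le_antisymm (by linarith) hp0
  -- p N = 1
  have hfeN : Feasible N (fun n => if N ≤ n ∧ n ≤ N then p n + (1 - p N) else p n) := by
    apply feas_if N N N p (1 - p N) hfp (by omega) le_rfl
    · exact Or.inl (by omega)
    · exact Or.inr (by linarith)
    · refine Or.inr ?_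
      have h := hm (N - 1) (by omega) (by omega)
      rw [show N - 1 + 1 = N from by omega] at h
      linarith
    · exact Or.inl rfl
  have h0N := pert N y p hmin N N (1 - p N) (by omega) le_rfl hfeN
  have hsumN : ∑ n ∈ Finset.Icc N N, (1 - 2 * y n) = -1 := by simp [hyN]; ring
  rw [hsumN] at h0N
  have hpN : p N = 1 := le_antisymm hpN1 (by linarith)
  -- block values at the two ends
  have hv1 : v 1 = 0 := by
    have := hpv 1 le_rfl hI 1 (by omega) hnI2pos
    rw [← this, hp1]
  have hvI : v I = 1 := by
    have := hpv I hI le_rfl N (by omega) hnN.ge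
    rw [← this, hpN]
  have hI2 : 2 ≤ I := by
    by_contra h
    have hI1 : I = 1 := by omega
    rw [hI1] at hvI
    rw [hvI] at hv1
    norm_num at hv1
  refine ⟨?_, ?_, ?_⟩
  · -- interior blocks
    intro i h2i hiI
    have hiI' : i < I := by omega
    have hb1 : nI i < nI (i + 1) := hninc i (by omega) (by omega)
    have hb2 : nI (i + 1) < N := by
      have := hnIlt (I + 1) (i + 1) (by omega) (by omega) le_rfl; omega
    have hb3 : 1 ≤ nI i := by
      have := hnIlt i 1 le_rfl (by omega) (by omega); omega
    have hva : ∀ n, nI i + 1 ≤ n → n ≤ nI (i + 1) → p n = v i := hpv i (by omega) (by omega)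
    have ei : i - 1 + 1 = i := by omega
    have hprevlt : nI (i - 1) < nI i := by
      have := hninc (i - 1) (by omega) (by omega); rw [ei] at this; exact this
    have hprev : p (nI i) = v (i - 1) := by
      apply hpv (i - 1) (by omega) (by omega) (nI i) (by omega)
      rw [ei]
    have hnextlt : nI (i + 1) < nI (i + 1 + 1) := hninc (i + 1) (by omega) (by omega)
    have hnext : p (nI (i + 1) + 1) = v (i + 1) :=
      hpv (i + 1) (by omega) (by omega) _ le_rfl (by omega)
    have hlt1 : v (i - 1) < v i := hmax (i - 1) i (by omega) (by omega) (by omega)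
    have hlt2 : v i < v (i + 1) := hmax i (i + 1) (by omega) (by omega) (by omega)
    have hf1 : Feasible N
        (fun n => if nI i + 1 ≤ n ∧ n ≤ nI (i + 1) then p n + (v (i + 1) - v i) else p n) := by
      apply feas_if N (nI i + 1) (nI (i + 1)) p (v (i + 1) - v i) hfp (by omega) (by omega)
      · exact Or.inl (by omega)
      · exact Or.inl hb2
      · refine Or.inr ?_
        rw [show nI i + 1 - 1 = nI i from by omega, hprev, hva (nI i + 1) le_rfl (by omega)]
        linarith
      · refine Or.inr ?_
        rw [hva (nI (i + 1)) (by omega) le_rfl, hnext]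
        linarith
    have hP := pert N y p hmin (nI i + 1) (nI (i + 1)) (v (i + 1) - v i) (by omega) (by omega) hf1
    have hf2 : Feasible N
        (fun n => if nI i + 1 ≤ n ∧ n ≤ nI (i + 1) then p n + (v (i - 1) - v i) else p n) := by
      apply feas_if N (nI i + 1) (nI (i + 1)) p (v (i - 1) - v i) hfp (by omega) (by omega)
      · exact Or.inl (by omega)
      · exact Or.inl hb2
      · refine Or.inr ?_
        rw [show nI i + 1 - 1 = nI i from by omega, hprev, hva (nI i + 1) le_rfl (by omega)]
        linarith
      · refine Or.inr ?_
        rw [hva (nI (i + 1)) (by omega) le_rfl, hnext]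
        linarith
    have hQ := pert N y p hmin (nI i + 1) (nI (i + 1)) (v (i - 1) - v i) (by omega) (by omega) hf2
    have hSge : 0 ≤ ∑ n ∈ Finset.Icc (nI i + 1) (nI (i + 1)), (1 - 2 * y n) := by
      by_contra h
      push_neg at h
      have := mul_neg_of_neg_of_pos h (show (0:ℝ) < v (i + 1) - v i by linarith)
      linarith
    have hSle : (∑ n ∈ Finset.Icc (nI i + 1) (nI (i + 1)), (1 - 2 * y n)) ≤ 0 := by
      by_contra h
      push_neg at h
      have := mul_neg_of_pos_of_neg h (show v (i - 1) - v i < 0 by linarith)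
      linarith
    have hS0 : (∑ n ∈ Finset.Icc (nI i + 1) (nI (i + 1)), (1 - 2 * y n)) = 0 :=
      le_antisymm hSle hSge
    have hcard : ((Finset.Icc (nI i + 1) (nI (i + 1))).card : ℝ)
        = (nI (i + 1) : ℝ) - (nI i : ℝ) := by
      rw [Nat.card_Icc, show nI (i + 1) + 1 - (nI i + 1) = nI (i + 1) - nI i from by omega,
        Nat.cast_sub (le_of_lt hb1)]
    have hsplit : (∑ n ∈ Finset.Icc (nI i + 1) (nI (i + 1)), (1 - 2 * y n))
        = ((Finset.Icc (nI i + 1) (nI (i + 1))).card : ℝ)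
          - 2 * ∑ n ∈ Finset.Icc (nI i + 1) (nI (i + 1)), y n := by
      rw [Finset.sum_sub_distrib, Finset.sum_const, nsmul_eq_mul, mul_one, Finset.mul_sum]
    rw [hcard] at hsplit
    rw [hS0] at hsplit
    linarith
  · -- first block
    by_contra hcon
    push_neg at hcon
    have hb : nI 2 < N := by
      have := hnIlt (I + 1) 2 one_le_two (by omega) le_rfl; omega
    have hblkval : ∀ n, 1 ≤ n → n ≤ nI 2 → p n = 0 := by
      intro n h1n h2n
      rw [hpv 1 le_rfl hI n (by omega) h2n, hv1]
    obtain ⟨k, hkmem, hkmax⟩ := Finset.exists_max_image (Finset.Icc 1 (nI 2))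
      (fun k => ∑ n ∈ Finset.Icc 1 k, (1 - 2 * y n)) ⟨1, Finset.mem_Icc.mpr ⟨le_rfl, hnI2pos⟩⟩
    simp only [Finset.mem_Icc] at hkmem
    have hck1 : (1 : ℝ) ≤ ∑ n ∈ Finset.Icc 1 k, (1 - 2 * y n) := by
      have h := hkmax 1 (Finset.mem_Icc.mpr ⟨le_rfl, hnI2pos⟩)
      rw [hsum1] at h
      exact h
    have hcard2 : ((Finset.Icc 1 (nI 2)).card : ℝ) = (nI 2 : ℝ) := by
      rw [Nat.card_Icc, show nI 2 + 1 - 1 = nI 2 from by omega]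
    have hfull : (∑ n ∈ Finset.Icc 1 (nI 2), (1 - 2 * y n))
        = ((Finset.Icc 1 (nI 2)).card : ℝ) - 2 * ∑ n ∈ Finset.Icc 1 (nI 2), y n := by
      rw [Finset.sum_sub_distrib, Finset.sum_const, nsmul_eq_mul, mul_one, Finset.mul_sum]
    rw [hcard2] at hfull
    have hfull0 : (∑ n ∈ Finset.Icc 1 (nI 2), (1 - 2 * y n)) ≤ 0 := by linarith
    have hklt : k < nI 2 := by
      rcases lt_or_eq_of_le hkmem.2 with h | h
      · exact h
      · rw [h] at hck1; linarith
    have hsp : (∑ n ∈ Finset.Icc 1 k, (1 - 2 * y n))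
        + ∑ n ∈ Finset.Icc (k + 1) (nI 2), (1 - 2 * y n)
        = ∑ n ∈ Finset.Icc 1 (nI 2), (1 - 2 * y n) := by
      rw [show Finset.Icc 1 k = Finset.Ioc 0 k from Finset.Icc_add_one_left_eq_Ioc 0 k,
        show Finset.Icc (k + 1) (nI 2) = Finset.Ioc k (nI 2) from Finset.Icc_add_one_left_eq_Ioc k _,
        show Finset.Icc 1 (nI 2) = Finset.Ioc 0 (nI 2) from Finset.Icc_add_one_left_eq_Ioc 0 _]
      exact Finset.sum_Ioc_consecutive _ (Nat.zero_le k) (by omega)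
    have hsuf : (∑ n ∈ Finset.Icc (k + 1) (nI 2), (1 - 2 * y n)) ≤ -1 := by linarith
    have hv2 : 0 < v 2 := by
      have := hmax 1 2 le_rfl one_lt_two hI2; linarith
    have hn23 : nI 2 < nI (2 + 1) := hninc 2 (by omega) hI2
    have hnext2 : p (nI 2 + 1) = v 2 := hpv 2 (by omega) hI2 _ le_rfl (by omega)
    have hf : Feasible N (fun n => if k + 1 ≤ n ∧ n ≤ nI 2 then p n + v 2 else p n) := by
      apply feas_if N (k + 1) (nI 2) p (v 2) hfp (by omega) (by omega)
      · exact Or.inl (by omega)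
      · exact Or.inl hb
      · refine Or.inr ?_
        rw [show k + 1 - 1 = k from by omega, hblkval k hkmem.1 (by omega),
          hblkval (k + 1) (by omega) (by omega)]
        linarith
      · refine Or.inr ?_
        rw [hblkval (nI 2) hnI2pos le_rfl, hnext2]
        linarith
    have hP := pert N y p hmin (k + 1) (nI 2) (v 2) (by omega) (by omega) hf
    have := mul_neg_of_neg_of_pos
      (show (∑ n ∈ Finset.Icc (k + 1) (nI 2), (1 - 2 * y n)) < 0 by linarith) hv2
    linarith
  · -- last block
    by_contra hcon
    push_neg at hcon
    have hnIIpos : 1 ≤ nI I := by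
      have := hnIle I 2 (by omega) hI2 (by omega); omega
    have hblkvalI : ∀ n, nI I + 1 ≤ n → n ≤ N → p n = 1 := by
      intro n h1n h2n
      rw [hpv I hI le_rfl n h1n (by omega), hvI]
    obtain ⟨k, hkmem, hkmin⟩ := Finset.exists_min_image (Finset.Icc (nI I + 1) N)
      (fun k => ∑ n ∈ Finset.Icc k N, (1 - 2 * y n)) ⟨N, Finset.mem_Icc.mpr ⟨by omega, le_rfl⟩⟩
    simp only [Finset.mem_Icc] at hkmem
    have hdk : (∑ n ∈ Finset.Icc k N, (1 - 2 * y n)) ≤ -1 := by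
      have h := hkmin N (Finset.mem_Icc.mpr ⟨by omega, le_rfl⟩)
      rw [hsumN] at h
      exact h
    have hcardI : ((Finset.Icc (nI I + 1) N).card : ℝ) = (N : ℝ) - (nI I : ℝ) := by
      rw [Nat.card_Icc, show N + 1 - (nI I + 1) = N - nI I from by omega,
        Nat.cast_sub (le_of_lt hIlt)]
    have hfullI : (∑ n ∈ Finset.Icc (nI I + 1) N, (1 - 2 * y n))
        = ((Finset.Icc (nI I + 1) N).card : ℝ) - 2 * ∑ n ∈ Finset.Icc (nI I + 1) N, y n := by
      rw [Finset.sum_sub_distrib, Finset.sum_const, nsmul_eq_mul, mul_one, Finset.mul_sum]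
    rw [hcardI] at hfullI
    have hfull0 : 0 ≤ ∑ n ∈ Finset.Icc (nI I + 1) N, (1 - 2 * y n) := by linarith
    have hkgt : nI I + 1 < k := by
      rcases lt_or_eq_of_le hkmem.1 with h | h
      · exact h
      · rw [← h] at hdk; linarith
    have hsp : (∑ n ∈ Finset.Icc (nI I + 1) (k - 1), (1 - 2 * y n))
        + ∑ n ∈ Finset.Icc k N, (1 - 2 * y n)
        = ∑ n ∈ Finset.Icc (nI I + 1) N, (1 - 2 * y n) := by
      have hk1 : k - 1 + 1 = k := by omega
      rw [show Finset.Icc (nI I + 1) (k - 1) = Finset.Ioc (nI I) (k - 1) from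
          Finset.Icc_add_one_left_eq_Ioc _ _,
        show Finset.Icc k N = Finset.Ioc (k - 1) N from by rw [← Finset.Icc_add_one_left_eq_Ioc, hk1],
        show Finset.Icc (nI I + 1) N = Finset.Ioc (nI I) N from Finset.Icc_add_one_left_eq_Ioc _ _]
      exact Finset.sum_Ioc_consecutive _ (by omega) (by omega)
    have hpre : (1 : ℝ) ≤ ∑ n ∈ Finset.Icc (nI I + 1) (k - 1), (1 - 2 * y n) := by linarith
    have eI : I - 1 + 1 = I := by omega
    have hprevltI : nI (I - 1) < nI I := by
      have := hninc (I - 1) (by omega) (by omega); rw [eI] at this; exact this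
    have hprevI : p (nI I) = v (I - 1) := by
      apply hpv (I - 1) (by omega) (by omega) (nI I) (by omega)
      rw [eI]
    have hltI : v (I - 1) < 1 := by
      have := hmax (I - 1) I (by omega) (by omega) le_rfl; linarith
    have hf : Feasible N
        (fun n => if nI I + 1 ≤ n ∧ n ≤ k - 1 then p n + (v (I - 1) - 1) else p n) := by
      apply feas_if N (nI I + 1) (k - 1) p (v (I - 1) - 1) hfp (by omega) (by omega)
      · exact Or.inl (by omega)
      · exact Or.inl (by omega)
      · refine Or.inr ?_
        rw [show nI I + 1 - 1 = nI I from by omega, hprevI,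
          hblkvalI (nI I + 1) le_rfl (by omega)]
        linarith
      · refine Or.inr ?_
        rw [hblkvalI (k - 1) (by omega) (by omega), show k - 1 + 1 = k from by omega,
          hblkvalI k (by omega) hkmem.2]
        linarith
    have hP := pert N y p hmin (nI I + 1) (k - 1) (v (I - 1) - 1) (by omega) (by omega) hf
    have := mul_neg_of_pos_of_neg
      (show (0:ℝ) < ∑ n ∈ Finset.Icc (nI I + 1) (k - 1), (1 - 2 * y n) by linarith)
      (show v (I - 1) - 1 < 0 by linarith)
    linarith
end

section
/- There exists an index τ ∈ {1,…,N−1} such that the hard threshold vector p^τ, defined by p^τ_n = 0 for n ≤ τ and p^τ_n = 1 for n > τ, satisfies E(p^τ) ≤ E(p) for every feasible calibration p. In other words, the minimum of the classification error over all monotone calibration maps is attained by a thresholding (hard) mapping. -/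
private lemma telescope (p : ℕ → ℝ) :
    ∀ M, 1 ≤ M →
      ∑ k ∈ Finset.Icc 1 M, (if k = 1 then p 1 else p k - p (k - 1)) = p M := by
  intro M hM
  induction M, hM using Nat.le_induction with
  | base => simp
  | succ M hM ih =>
    rw [Finset.sum_Icc_succ_top (by omega : 1 ≤ M + 1), ih]
    have : M + 1 ≠ 1 := by omega
    simp [this, show M ≠ 0 by omega]

private lemma abel (a p : ℕ → ℝ) :
    ∀ M, 1 ≤ M →
      ∑ n ∈ Finset.Icc 1 M, a n * p n =
        ∑ k ∈ Finset.Icc 1 M,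
          (if k = 1 then p 1 else p k - p (k - 1)) * (∑ n ∈ Finset.Icc k M, a n) := by
  intro M hM
  induction M, hM using Nat.le_induction with
  | base => simp; ring
  | succ M hM ih =>
    rw [Finset.sum_Icc_succ_top (by omega : 1 ≤ M + 1),
        Finset.sum_Icc_succ_top (by omega : 1 ≤ M + 1), ih]
    have hinner : ∀ k ∈ Finset.Icc 1 M,
        (if k = 1 then p 1 else p k - p (k - 1)) * (∑ n ∈ Finset.Icc k (M + 1), a n) =
        (if k = 1 then p 1 else p k - p (k - 1)) * (∑ n ∈ Finset.Icc k M, a n)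
          + (if k = 1 then p 1 else p k - p (k - 1)) * a (M + 1) := by
      intro k hk
      rw [Finset.sum_Icc_succ_top (by simp at hk; omega : k ≤ M + 1)]
      ring
    rw [Finset.sum_congr rfl hinner, Finset.sum_add_distrib, ← Finset.sum_mul,
        telescope p M hM]
    have : M + 1 ≠ 1 := by omega
    simp only [this, if_false, Finset.Icc_self, Finset.sum_singleton]
    have h1 : M + 1 - 1 = M := by omega
    rw [h1]
    ring

theorem stmt3 (N : ℕ) (hN : 2 ≤ N) (y : ℕ → ℝ)
    (hy : ∀ n ∈ Finset.Icc 1 N, y n = 0 ∨ y n = 1)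
    (hy1 : y 1 = 0) (hyN : y N = 1) :
    ∃ τ, 1 ≤ τ ∧ τ ≤ N - 1 ∧
      ∀ p, Feasible N p →
        clErr N y (fun n => if n ≤ τ then (0 : ℝ) else 1) ≤ clErr N y p := by
  set a : ℕ → ℝ := fun n => 1 - 2 * y n with ha
  set A : ℕ → ℝ := fun k => ∑ n ∈ Finset.Icc k N, a n with hA
  -- choose minimizer of A over [2, N]
  obtain ⟨K, hKmem, hKmin⟩ := Finset.exists_min_image (Finset.Icc 2 N) A
    ⟨2, by simp; omega⟩
  simp only [Finset.mem_Icc] at hKmem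
  obtain ⟨hK2, hKN⟩ := hKmem
  -- basic facts about A
  have hAN : A N = -1 := by simp [hA, ha, hyN]; norm_num
  have hm_le : A K ≤ -1 := hAN ▸ hKmin N (by simp; omega)
  have hm_nonpos : A K ≤ 0 := hm_le.trans (by norm_num)
  have hA1 : A K ≤ A 1 := by
    have hsplit : Finset.Icc 1 N = insert 1 (Finset.Icc 2 N) := by
      ext x; simp [Finset.mem_Icc]; omega
    have : A 1 = a 1 + A 2 := by
      simp only [hA]; rw [hsplit, Finset.sum_insert (by simp)]
    rw [this]
    have h2 : A K ≤ A 2 := hKmin 2 (by simp; omega)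
    have : a 1 = 1 := by simp [ha, hy1]
    linarith
  have hAall : ∀ k ∈ Finset.Icc 1 N, A K ≤ A k := by
    intro k hk
    simp only [Finset.mem_Icc] at hk
    rcases Nat.eq_or_lt_of_le hk.1 with h1 | h1
    · exact h1 ▸ hA1
    · exact hKmin k (by simp; omega)
  refine ⟨K - 1, by omega, by omega, ?_⟩
  intro p hp
  obtain ⟨hp0, hp1, hmono⟩ := hp
  -- rewrite clErr in linear form
  have hlin : ∀ q : ℕ → ℝ, clErr N y q =
      (∑ n ∈ Finset.Icc 1 N, y n) + ∑ n ∈ Finset.Icc 1 N, a n * q n := by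
    intro q
    rw [clErr, ← Finset.sum_add_distrib]
    refine Finset.sum_congr rfl fun n _ => ?_
    simp only [ha]; ring
  rw [hlin, hlin]
  apply add_le_add le_rfl
  -- threshold side equals A K
  have hthr : ∑ n ∈ Finset.Icc 1 N,
      a n * (if n ≤ K - 1 then (0 : ℝ) else 1) = A K := by
    rw [hA]
    rw [← Finset.sum_subset (Finset.Icc_subset_Icc (by omega) le_rfl :
        Finset.Icc K N ⊆ Finset.Icc 1 N)]
    · refine Finset.sum_congr rfl fun n hn => ?_
      simp only [Finset.mem_Icc] at hn
      have : ¬ n ≤ K - 1 := by omega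
      simp [this]
    · intro n hn hn'
      simp only [Finset.mem_Icc] at hn hn'
      have : n ≤ K - 1 := by omega
      simp [this]
  rw [hthr]
  -- Abel summation for p
  set d : ℕ → ℝ := fun k => if k = 1 then p 1 else p k - p (k - 1) with hd
  have habel := abel a p N (by omega)
  rw [habel]
  have hdnonneg : ∀ k ∈ Finset.Icc 1 N, 0 ≤ d k := by
    intro k hk
    simp only [Finset.mem_Icc] at hk
    rcases Nat.eq_or_lt_of_le hk.1 with h1 | h1
    · simp [hd, ← h1, hp0]
    · have : p (k - 1) ≤ p k := by
        have := hmono (k - 1) (by omega) (by omega)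
        have hk1 : k - 1 + 1 = k := by omega
        rwa [hk1] at this
      have hne : k ≠ 1 := by omega
      simp [hd, hne]; linarith
  have hsum_d : ∑ k ∈ Finset.Icc 1 N, d k = p N := telescope p N (by omega)
  calc A K = 1 * A K := (one_mul _).symm
    _ ≤ p N * A K := mul_le_mul_of_nonpos_right hp1 hm_nonpos
    _ = ∑ k ∈ Finset.Icc 1 N, d k * A K := by rw [← Finset.sum_mul, hsum_d]
    _ ≤ ∑ k ∈ Finset.Icc 1 N, d k * A k := by
        refine Finset.sum_le_sum fun k hk => ?_
        exact mul_le_mul_of_nonneg_left (hAall k hk) (hdnonneg k hk)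
    _ = ∑ k ∈ Finset.Icc 1 N, (if k = 1 then p 1 else p k - p (k - 1)) *
          (∑ n ∈ Finset.Icc k N, a n) := by rfl
end

section
/- Let p* be a minimizer of the classification error E over all feasible calibrations, with maximal block decomposition 0 = n_1 < n_2 < … < n_{I+1} = N (distinct block values, I ≥ 2). Then for every interior boundary, i.e. for every i ∈ {2,…,I} and τ = n_i, the hard threshold vector p^τ (with p^τ_n = 0 for n ≤ τ and p^τ_n = 1 for n > τ) attains the minimum of E over all feasible calibrations. -/
theorem stmt4 (N : ℕ) (hN : 2 ≤ N) (y : ℕ → ℝ)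
    (hy : ∀ n ∈ Finset.Icc 1 N, y n = 0 ∨ y n = 1)
    (hy1 : y 1 = 0) (hyN : y N = 1)
    (p : ℕ → ℝ) (hp : Feasible N p)
    (hmin : ∀ q, Feasible N q → clErr N y p ≤ clErr N y q)
    (I : ℕ) (hI : 2 ≤ I) (nI : ℕ → ℕ) (v : ℕ → ℝ)
    (hblock : BlockDecomp N I p nI v)
    (hmax : ∀ i j, 1 ≤ i → i < j → j ≤ I → v i < v j) :
    ∀ i, 2 ≤ i → i ≤ I →
      ∀ q, Feasible N q →
        clErr N y (fun n => if n ≤ nI i then (0 : ℝ) else 1) ≤ clErr N y q := by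
  intro i hi2 hiI q' hq'
  obtain ⟨h1, hN1, hlt, hval⟩ := hblock
  have hmono : ∀ a b : ℕ, 1 ≤ a → a ≤ b → b ≤ I + 1 → nI a ≤ nI b := by
    intro a b ha hab hb
    induction b with
    | zero => omega
    | succ b ih =>
      rcases Nat.eq_or_lt_of_le hab with h | h
      · rw [h]
      · have hab' : a ≤ b := by omega
        exact le_trans (ih hab' (by omega)) (le_of_lt (hlt b (by omega) (by omega)))
  have hτ1 : 1 ≤ nI i := by
    have h2 := hmono 2 i (by omega) hi2 (by omega)
    have h3 := hlt 1 (by omega) (by omega)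
    norm_num at h3
    omega
  have hτN : nI i < N := by
    have h2 := hmono (i + 1) (I + 1) (by omega) (by omega) le_rfl
    have h3 := hlt i (by omega) hiI
    omega
  have hii : i - 1 + 1 = i := by omega
  have hlt' : nI (i - 1) < nI i := by
    have := hlt (i - 1) (by omega) (by omega); rwa [hii] at this
  have hpτ : p (nI i) = v (i - 1) := by
    have := hval (i - 1) (by omega) (by omega) (nI i) (by omega) (by rw [hii])
    exact this
  have hpτ1 : p (nI i + 1) = v i :=
    hval i (by omega) hiI (nI i + 1) le_rfl (hlt i (by omega) hiI)
  set q : ℕ → ℝ := fun n => if n ≤ nI i then (0 : ℝ) else 1 with hqdef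
  set δ : ℝ := v i - v (i - 1) with hδdef
  have hδ : 0 < δ := sub_pos.mpr (hmax (i - 1) i (by omega) (by omega) hiI)
  obtain ⟨hp0, hpN, hpm⟩ := hp
  have hq1 : q 1 = 0 := if_pos hτ1
  have hqN : q N = 1 := if_neg (by omega)
  have hfeas : Feasible N (fun n => (1 + δ) * p n - δ * q n) := by
    refine ⟨?_, ?_, ?_⟩
    · simp only [hq1]
      nlinarith
    · simp only [hqN]
      nlinarith
    · intro n hn1 hnN
      simp only [hqdef]
      by_cases hA : n + 1 ≤ nI i
      · have hB : n ≤ nI i := by omega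
        simp only [if_pos hA, if_pos hB]
        nlinarith [hpm n hn1 hnN]
      · by_cases hB : n ≤ nI i
        · have hnτ : n = nI i := by omega
          simp only [if_neg hA, if_pos hB]
          rw [hnτ, hpτ, hpτ1]
          nlinarith
        · simp only [if_neg hA, if_neg hB]
          nlinarith [hpm n hn1 hnN]
  have hE : clErr N y (fun n => (1 + δ) * p n - δ * q n)
      = (1 + δ) * clErr N y p - δ * clErr N y q := by
    unfold clErr
    rw [Finset.mul_sum, Finset.mul_sum, ← Finset.sum_sub_distrib]
    exact Finset.sum_congr rfl fun n _ => by ring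
  have hEq : clErr N y q ≤ clErr N y p := by
    have h := hmin _ hfeas
    rw [hE] at h
    nlinarith
  exact le_trans hEq (hmin q' hq')
end

section
/- Let p* be a minimizer of the class-weighted classification error E_α over all feasible calibrations, and let 0 = n_1 < n_2 < … < n_{I+1} = N be its maximal block decomposition (pairwise distinct block values v_1 < … < v_I). Then for every interior block i ∈ {2,…,I−1}, exactly a 1/(α+1) fraction of its targets equal one, i.e. Σ_{n=n_i+1}^{n_{i+1}} y_n = (n_{i+1}−n_i)/(α+1); the first block satisfies Σ_{n=1}^{n_2} y_n < n_2/(α+1); and the last block satisfies Σ_{n=n_I+1}^{N} y_n > (N−n_I)/(α+1). -/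
/-- The class-weighted classification error
`E_α(p) = Σ_{n=1}^N [α y_n (1 - p_n) + (1 - y_n) p_n]`. -/
def clErrW (N : ℕ) (α : ℝ) (y p : ℕ → ℝ) : ℝ :=
  ∑ n ∈ Finset.Icc 1 N, (α * y n * (1 - p n) + (1 - y n) * p n)

private lemma perturb_ineq {N : ℕ} {α : ℝ} {y p : ℕ → ℝ}
    (hmin : ∀ q, Feasible N q → clErrW N α y p ≤ clErrW N α y q)
    (f : ℕ → ℝ) (hfeas : Feasible N (fun n => p n + f n)) :
    0 ≤ ∑ n ∈ Finset.Icc 1 N, f n * (1 - (α + 1) * y n) := by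
  have h := hmin _ hfeas
  have hd : clErrW N α y (fun n => p n + f n) - clErrW N α y p
      = ∑ n ∈ Finset.Icc 1 N, f n * (1 - (α + 1) * y n) := by
    unfold clErrW
    rw [← Finset.sum_sub_distrib]
    exact Finset.sum_congr rfl fun n _ => by ring
  rw [← hd]
  linarith

private lemma bump_T {N : ℕ} {α : ℝ} {y p : ℕ → ℝ}
    (hmin : ∀ q, Feasible N q → clErrW N α y p ≤ clErrW N α y q)
    {a b : ℕ} (ha : 1 ≤ a) (hb : b ≤ N) {ε : ℝ}
    (hfeas : Feasible N (fun n => p n + if n ∈ Finset.Icc a b then ε else 0)) :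
    0 ≤ ε * ∑ n ∈ Finset.Icc a b, (1 - (α + 1) * y n) := by
  have h := perturb_ineq hmin (fun n => if n ∈ Finset.Icc a b then ε else 0) hfeas
  rw [← Finset.sum_subset (Finset.Icc_subset_Icc ha hb)
      (fun x _ hx => by rw [if_neg hx, zero_mul])] at h
  rw [Finset.mul_sum]
  calc (0:ℝ) ≤ ∑ n ∈ Finset.Icc a b,
      (if n ∈ Finset.Icc a b then ε else 0) * (1 - (α + 1) * y n) := h
    _ = ∑ n ∈ Finset.Icc a b, ε * (1 - (α + 1) * y n) :=
      Finset.sum_congr rfl fun n hn => by rw [if_pos hn]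

private lemma raise_feasible {N : ℕ} {p : ℕ → ℝ} (hp : Feasible N p)
    (a b : ℕ) {ε : ℝ} (hε : 0 ≤ ε) (hb : b ≤ N)
    (hleave : b < N → p b + ε ≤ p (b + 1))
    (htop : b = N → p N + ε ≤ 1) :
    Feasible N (fun n => p n + if n ∈ Finset.Icc a b then ε else 0) := by
  obtain ⟨h0, h1, hm⟩ := hp
  refine ⟨?_, ?_, ?_⟩
  · show 0 ≤ p 1 + if 1 ∈ Finset.Icc a b then ε else 0
    split_ifs <;> linarith
  · show p N + (if N ∈ Finset.Icc a b then ε else 0) ≤ 1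
    split_ifs with h
    · exact htop (le_antisymm hb (Finset.mem_Icc.mp h).2)
    · linarith
  · intro n hn hnN
    show p n + (if n ∈ Finset.Icc a b then ε else 0)
        ≤ p (n + 1) + (if n + 1 ∈ Finset.Icc a b then ε else 0)
    by_cases hA : n ∈ Finset.Icc a b <;> by_cases hB : n + 1 ∈ Finset.Icc a b
    · rw [if_pos hA, if_pos hB]; linarith [hm n hn hnN]
    · rw [if_pos hA, if_neg hB]
      have hmem := Finset.mem_Icc.mp hA
      have hnb : n = b := by
        simp only [Finset.mem_Icc, not_and, not_le] at hB
        omega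
      subst hnb
      linarith [hleave hnN]
    · rw [if_neg hA, if_pos hB]; linarith [hm n hn hnN]
    · rw [if_neg hA, if_neg hB]; linarith [hm n hn hnN]

private lemma lower_feasible {N : ℕ} {p : ℕ → ℝ} (hp : Feasible N p)
    (a b : ℕ) {ε : ℝ} (hε : 0 ≤ ε)
    (h1 : 1 ∈ Finset.Icc a b → ε ≤ p 1)
    (henter : 2 ≤ a → a ≤ b → p (a - 1) + ε ≤ p a) :
    Feasible N (fun n => p n + if n ∈ Finset.Icc a b then -ε else 0) := by
  obtain ⟨h0, hN, hm⟩ := hp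
  refine ⟨?_, ?_, ?_⟩
  · show 0 ≤ p 1 + if 1 ∈ Finset.Icc a b then -ε else 0
    split_ifs with h
    · linarith [h1 h]
    · linarith
  · show p N + (if N ∈ Finset.Icc a b then -ε else 0) ≤ 1
    split_ifs <;> linarith
  · intro n hn hnN
    show p n + (if n ∈ Finset.Icc a b then -ε else 0)
        ≤ p (n + 1) + (if n + 1 ∈ Finset.Icc a b then -ε else 0)
    by_cases hA : n ∈ Finset.Icc a b <;> by_cases hB : n + 1 ∈ Finset.Icc a b
    · rw [if_pos hA, if_pos hB]; linarith [hm n hn hnN]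
    · rw [if_pos hA, if_neg hB]; linarith [hm n hn hnN]
    · rw [if_neg hA, if_pos hB]
      have hmem := Finset.mem_Icc.mp hB
      have hna : a = n + 1 := by
        simp only [Finset.mem_Icc, not_and, not_le] at hA
        omega
      have h' := henter (by omega) (by omega)
      rw [hna] at h'
      simp only [Nat.add_sub_cancel] at h'
      linarith
    · rw [if_neg hA, if_neg hB]; linarith [hm n hn hnN]

private lemma nI_lt {I : ℕ} {nI : ℕ → ℕ}
    (h : ∀ i, 1 ≤ i → i ≤ I → nI i < nI (i + 1)) :
    ∀ s t, 1 ≤ s → s < t → t ≤ I + 1 → nI s < nI t := by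
  intro s t hs
  induction t with
  | zero => intro h1 _; omega
  | succ t ih =>
    intro hst htI
    rcases Nat.lt_or_ge s t with h' | h'
    · exact (ih h' (by omega)).trans (h t (by omega) (by omega))
    · have hst' : s = t := by omega
      subst hst'
      exact h s hs (by omega)

theorem stmt6 (N : ℕ) (hN : 2 ≤ N) (y : ℕ → ℝ)
    (hy : ∀ n ∈ Finset.Icc 1 N, y n = 0 ∨ y n = 1)
    (hy1 : y 1 = 0) (hyN : y N = 1)
    (α : ℝ) (hα : 0 < α)
    (p : ℕ → ℝ) (hp : Feasible N p)
    (hmin : ∀ q, Feasible N q → clErrW N α y p ≤ clErrW N α y q)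
    (I : ℕ) (hI : 1 ≤ I) (nI : ℕ → ℕ) (v : ℕ → ℝ)
    (hblock : BlockDecomp N I p nI v)
    (hmax : ∀ i j, 1 ≤ i → i < j → j ≤ I → v i < v j) :
    (∀ i, 2 ≤ i → i ≤ I - 1 →
      (∑ n ∈ Finset.Icc (nI i + 1) (nI (i + 1)), y n) =
        ((nI (i + 1) : ℝ) - (nI i : ℝ)) / (α + 1)) ∧
    (∑ n ∈ Finset.Icc 1 (nI 2), y n) < (nI 2 : ℝ) / (α + 1) ∧
    (∑ n ∈ Finset.Icc (nI I + 1) N, y n) > ((N : ℝ) - (nI I : ℝ)) / (α + 1) := by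
  obtain ⟨hn1, hnN, hlt, hval⟩ := hblock
  have hα1 : (0:ℝ) < α + 1 := by linarith
  have hnlt := nI_lt hlt
  have hsum : ∀ a b : ℕ, ∑ n ∈ Finset.Icc a b, (1 - (α + 1) * y n)
      = ((Finset.Icc a b).card : ℝ) - (α + 1) * ∑ n ∈ Finset.Icc a b, y n := by
    intro a b
    rw [Finset.sum_sub_distrib, Finset.mul_sum]
    simp [Finset.sum_const]
  -- minimizer has p N = 1
  have hpN1 : p N = 1 := by
    have hfeas := raise_feasible hp N N (ε := 1 - p N) (by linarith [hp.2.1]) le_rfl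
        (fun h => absurd h (lt_irrefl N)) (fun _ => by linarith)
    have h := bump_T hmin (by omega : 1 ≤ N) le_rfl hfeas
    rw [Finset.Icc_self, Finset.sum_singleton, hyN] at h
    nlinarith [hp.2.1, hα]
  -- minimizer has p 1 = 0
  have hp10 : p 1 = 0 := by
    have hfeas := lower_feasible hp 1 1 (ε := p 1) hp.1
        (fun _ => le_rfl) (fun h2 _ => absurd h2 (by omega))
    have h := bump_T hmin le_rfl (by omega : 1 ≤ N) hfeas
    rw [Finset.Icc_self, Finset.sum_singleton, hy1] at h
    nlinarith [hp.1]
  -- I = 1 impossible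
  have hI2 : 2 ≤ I := by
    by_contra h
    have hI1 : I = 1 := by omega
    subst hI1
    have e1 : p 1 = v 1 := hval 1 le_rfl le_rfl 1 (by omega) (by omega)
    have e2 : p N = v 1 := hval 1 le_rfl le_rfl N (by omega) (by omega)
    rw [hp10] at e1
    rw [hpN1] at e2
    linarith [e1, e2]
  -- Part B : first block
  have hB : (∑ n ∈ Finset.Icc 1 (nI 2), y n) < (nI 2 : ℝ) / (α + 1) := by
    have hv12 : v 1 < v 2 := hmax 1 2 le_rfl one_lt_two hI2
    have hn2N : nI 2 < N := by
      have := hnlt 2 (I + 1) (by omega) (by omega) le_rfl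
      omega
    have hn2pos : 1 ≤ nI 2 := by have := hnlt 1 2 le_rfl one_lt_two (by omega); omega
    have epb : p (nI 2) = v 1 := hval 1 le_rfl hI (nI 2) (by omega) le_rfl
    have epb1 : p (nI 2 + 1) = v 2 := by
      have h3 := hlt 2 (by omega) hI2
      exact hval 2 (by omega) hI2 (nI 2 + 1) le_rfl (by omega)
    have hfeas := raise_feasible hp 2 (nI 2) (ε := v 2 - v 1) (by linarith) hn2N.le
        (fun _ => by rw [epb, epb1]; linarith)
        (fun h => absurd h hn2N.ne)
    have h := bump_T hmin (by omega : 1 ≤ 2) hn2N.le hfeas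
    have hT2 : 0 ≤ ∑ n ∈ Finset.Icc 2 (nI 2), (1 - (α + 1) * y n) := by
      nlinarith [h, hv12]
    rw [hsum 2 (nI 2)] at hT2
    have hcard : ((Finset.Icc 2 (nI 2)).card : ℝ) = (nI 2 : ℝ) - 1 := by
      rw [Nat.card_Icc, show nI 2 + 1 - 2 = nI 2 - 1 from by omega,
        Nat.cast_sub hn2pos, Nat.cast_one]
    rw [hcard] at hT2
    have hsplit : Finset.Icc 1 (nI 2) = insert 1 (Finset.Icc 2 (nI 2)) := by
      ext n; simp only [Finset.mem_Icc, Finset.mem_insert]; omega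
    have h1not : 1 ∉ Finset.Icc 2 (nI 2) := by
      simp only [Finset.mem_Icc]; omega
    have hysplit : ∑ n ∈ Finset.Icc 1 (nI 2), y n = ∑ n ∈ Finset.Icc 2 (nI 2), y n := by
      rw [hsplit, Finset.sum_insert h1not, hy1, zero_add]
    rw [hysplit, lt_div_iff₀ hα1]
    linarith
  -- Part C : last block
  have hC : (∑ n ∈ Finset.Icc (nI I + 1) N, y n) > ((N : ℝ) - (nI I : ℝ)) / (α + 1) := by
    have hvI : v (I - 1) < v I := hmax (I - 1) I (by omega) (by omega) le_rfl
    have hnII : 1 ≤ nI I := by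
      have := hnlt 1 I le_rfl (by omega) (by omega); omega
    have hnIN : nI I < N := by
      have := hlt I (by omega) le_rfl; omega
    have hi1 : I - 1 + 1 = I := by omega
    have hdn := hlt (I - 1) (by omega) (by omega)
    rw [hi1] at hdn
    have henter : 2 ≤ nI I + 1 → nI I + 1 ≤ N - 1 →
        p (nI I + 1 - 1) + (v I - v (I - 1)) ≤ p (nI I + 1) := by
      intro _ hab
      have e1 : p (nI I) = v (I - 1) :=
        hval (I - 1) (by omega) (by omega) (nI I) (by omega) (by rw [hi1])
      have e2 : p (nI I + 1) = v I := hval I (by omega) le_rfl (nI I + 1) le_rfl (by omega)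
      simp only [Nat.add_sub_cancel]
      rw [e1, e2]; linarith
    have hfeas := lower_feasible hp (nI I + 1) (N - 1) (ε := v I - v (I - 1)) (by linarith)
        (fun hmem => absurd (Finset.mem_Icc.mp hmem).1 (by omega)) henter
    have h := bump_T hmin (by omega : 1 ≤ nI I + 1) (by omega : N - 1 ≤ N) hfeas
    have hTpre : ∑ n ∈ Finset.Icc (nI I + 1) (N - 1), (1 - (α + 1) * y n) ≤ 0 := by
      nlinarith [h, hvI]
    have hsplit : Finset.Icc (nI I + 1) N = insert N (Finset.Icc (nI I + 1) (N - 1)) := by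
      ext n; simp only [Finset.mem_Icc, Finset.mem_insert]; omega
    have hNnot : N ∉ Finset.Icc (nI I + 1) (N - 1) := by
      simp only [Finset.mem_Icc]; omega
    have hT : ∑ n ∈ Finset.Icc (nI I + 1) N, (1 - (α + 1) * y n) ≤ -α := by
      rw [hsplit, Finset.sum_insert hNnot, hyN]
      linarith [hTpre]
    rw [hsum] at hT
    have hcard : ((Finset.Icc (nI I + 1) N).card : ℝ) = (N : ℝ) - (nI I : ℝ) := by
      rw [Nat.card_Icc, show N + 1 - (nI I + 1) = N - nI I from by omega,
        Nat.cast_sub hnIN.le]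
    rw [hcard] at hT
    rw [gt_iff_lt, div_lt_iff₀ hα1]
    linarith
  -- Part A : interior blocks
  have hA : ∀ i, 2 ≤ i → i ≤ I - 1 →
      (∑ n ∈ Finset.Icc (nI i + 1) (nI (i + 1)), y n) =
        ((nI (i + 1) : ℝ) - (nI i : ℝ)) / (α + 1) := by
    intro i hi2 hiI
    have hiI' : i + 1 ≤ I := by omega
    have hvup : v i < v (i + 1) := hmax i (i + 1) (by omega) (by omega) hiI'
    have hvdn : v (i - 1) < v i := hmax (i - 1) i (by omega) (by omega) (by omega)
    have hbN : nI (i + 1) < N := by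
      have := hnlt (i + 1) (I + 1) (by omega) (by omega) le_rfl; omega
    have hnipos : 1 ≤ nI i := by
      have := hnlt 1 i le_rfl (by omega) (by omega); omega
    have hab : nI i < nI (i + 1) := hlt i (by omega) (by omega)
    have hi1 : i - 1 + 1 = i := by omega
    have hdn := hlt (i - 1) (by omega) (by omega)
    rw [hi1] at hdn
    have hup := hlt (i + 1) (by omega) hiI'
    have epb : p (nI (i + 1)) = v i := hval i (by omega) (by omega) _ (by omega) le_rfl
    have epb1 : p (nI (i + 1) + 1) = v (i + 1) :=
      hval (i + 1) (by omega) hiI' _ le_rfl (by omega)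
    have epa : p (nI i + 1) = v i := hval i (by omega) (by omega) _ le_rfl (by omega)
    have epa0 : p (nI i) = v (i - 1) :=
      hval (i - 1) (by omega) (by omega) (nI i) (by omega) (by rw [hi1])
    have hfeasU := raise_feasible hp (nI i + 1) (nI (i + 1)) (ε := v (i + 1) - v i)
        (by linarith) hbN.le
        (fun _ => by rw [epb, epb1]; linarith)
        (fun h => absurd h hbN.ne)
    have hU := bump_T hmin (by omega : 1 ≤ nI i + 1) hbN.le hfeasU
    have hfeasD := lower_feasible hp (nI i + 1) (nI (i + 1)) (ε := v i - v (i - 1))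
        (by linarith)
        (fun hmem => absurd (Finset.mem_Icc.mp hmem).1 (by omega))
        (fun _ _ => by simp only [Nat.add_sub_cancel]; rw [epa0, epa]; linarith)
    have hD := bump_T hmin (by omega : 1 ≤ nI i + 1) hbN.le hfeasD
    have hT : ∑ n ∈ Finset.Icc (nI i + 1) (nI (i + 1)), (1 - (α + 1) * y n) = 0 := by
      have hpos : (0:ℝ) ≤ ∑ n ∈ Finset.Icc (nI i + 1) (nI (i + 1)), (1 - (α + 1) * y n) := by
        nlinarith [hU, hvup]
      have hneg : ∑ n ∈ Finset.Icc (nI i + 1) (nI (i + 1)), (1 - (α + 1) * y n) ≤ 0 := by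
        nlinarith [hD, hvdn]
      linarith
    rw [hsum] at hT
    have hcard : ((Finset.Icc (nI i + 1) (nI (i + 1))).card : ℝ)
        = (nI (i + 1) : ℝ) - (nI i : ℝ) := by
      rw [Nat.card_Icc, show nI (i + 1) + 1 - (nI i + 1) = nI (i + 1) - nI i from by omega,
        Nat.cast_sub hab.le]
    rw [hcard] at hT
    rw [eq_div_iff (ne_of_gt hα1)]
    linarith
  exact ⟨hA, hB, hC⟩
end

section
/- There exists an index τ ∈ {1,…,N−1} such that the hard threshold vector p^τ, defined by p^τ_n = 0 for n ≤ τ and p^τ_n = 1 for n > τ, satisfies E_α(p^τ) ≤ E_α(p) for every feasible calibration p. That is, the minimum of the class-weighted classification error over all monotone calibration maps is attained by a thresholding (hard) mapping. -/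
theorem stmt7 (N : ℕ) (hN : 2 ≤ N) (y : ℕ → ℝ)
    (hy : ∀ n ∈ Finset.Icc 1 N, y n = 0 ∨ y n = 1)
    (hy1 : y 1 = 0) (hyN : y N = 1)
    (α : ℝ) (hα : 0 < α) :
    ∃ τ, 1 ≤ τ ∧ τ ≤ N - 1 ∧
      ∀ p, Feasible N p →
        clErrW N α y (fun n => if n ≤ τ then (0 : ℝ) else 1) ≤ clErrW N α y p := by
  classical
  set c : ℕ → ℝ := fun n => (1 - y n) - α * y n with hc
  set S : ℕ → ℝ := fun τ => ∑ n ∈ Finset.Icc (τ + 1) N, c n with hSdef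
  obtain ⟨τ, hτmem, hτmin⟩ :=
    Finset.exists_min_image (Finset.Icc 1 (N - 1)) S ⟨1, by simp; omega⟩
  obtain ⟨hτ1, hτN⟩ := Finset.mem_Icc.mp hτmem
  set m := S τ with hm
  have hm_le : ∀ k, 1 ≤ k → k ≤ N - 1 → m ≤ S k := fun k h1 h2 =>
    hτmin k (Finset.mem_Icc.mpr ⟨h1, h2⟩)
  -- S (N-1) = c N
  have hSN1 : S (N - 1) = c N := by
    have h : N - 1 + 1 = N := by omega
    simp [hSdef, h]
  have hcN : c N = -α := by simp [hc, hyN]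
  have hmneg : m < 0 := by
    have := hm_le (N - 1) (by omega) le_rfl
    rw [hSN1, hcN] at this
    linarith
  have hsplit' : ∀ (p : ℕ → ℝ) k, k ≤ N →
      (∑ n ∈ Finset.Icc k N, c n * p n)
        = c k * p k + ∑ n ∈ Finset.Icc (k + 1) N, c n * p n := by
    intro p k h2
    rw [Finset.Icc_eq_cons_Ioc h2, Finset.sum_cons, Finset.Icc_add_one_left_eq_Ioc]
  -- error decomposition
  have hE : ∀ p : ℕ → ℝ, clErrW N α y p
      = α * (∑ n ∈ Finset.Icc 1 N, y n) + ∑ n ∈ Finset.Icc 1 N, c n * p n := by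
    intro p
    unfold clErrW
    rw [Finset.mul_sum, ← Finset.sum_add_distrib]
    exact Finset.sum_congr rfl fun n _ => by simp only [hc]; ring
  -- the threshold error equals α Σ y + m
  have hThresh : clErrW N α y (fun n => if n ≤ τ then (0 : ℝ) else 1)
      = α * (∑ n ∈ Finset.Icc 1 N, y n) + m := by
    rw [hE]
    congr 1
    have h1 : ∀ n ∈ Finset.Icc 1 N,
        c n * (if n ≤ τ then (0 : ℝ) else 1) = if τ < n then c n else 0 := by
      intro n _
      by_cases h : n ≤ τ
      · simp [h, Nat.not_lt.mpr h]
      · simp [h, Nat.lt_of_not_le h]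
    rw [Finset.sum_congr rfl h1, ← Finset.sum_filter]
    have h2 : (Finset.Icc 1 N).filter (fun n => τ < n) = Finset.Icc (τ + 1) N := by
      ext n
      simp only [Finset.mem_filter, Finset.mem_Icc]
      omega
    rw [h2]
  refine ⟨τ, hτ1, hτN, ?_⟩
  rintro p ⟨hp0, hp1, hmono⟩
  -- downward induction
  have key : ∀ d, d ≤ N - 1 →
      S (N - d - 1) * p (N - d) + m * (p N - p (N - d))
        ≤ ∑ n ∈ Finset.Icc (N - d) N, c n * p n := by
    intro d
    induction d with
    | zero =>
      intro _
      have h : N - 0 = N := by omega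
      rw [h, hSN1]
      simp
    | succ d ih =>
      intro hd
      have hk : N - (d + 1) = N - d - 1 := by omega
      set k := N - (d + 1) with hkdef
      have hk1 : 1 ≤ k := by omega
      have hkN : k ≤ N - 1 := by omega
      have hkk : k + 1 = N - d := by omega
      have hik := ih (by omega)
      rw [hsplit' p k (by omega)]
      have hSk : S (k - 1 + 1) * p (k + 1) + m * (p N - p (k + 1))
          ≤ ∑ n ∈ Finset.Icc (k + 1) N, c n * p n := by
        have h1 : k - 1 + 1 = k := by omega
        have h2 : N - d - 1 = k := by omega
        rw [h1]
        have : S (N - d - 1) * p (N - d) + m * (p N - p (N - d))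
            ≤ ∑ n ∈ Finset.Icc (N - d) N, c n * p n := hik
        rwa [h2, ← hkk] at this
      have hScS : S (k - 1) = c k + S k := by
        have h1 : k - 1 + 1 = k := by omega
        simp only [hSdef, h1]
        rw [Finset.Icc_eq_cons_Ioc (by omega : k ≤ N), Finset.sum_cons, Finset.Icc_add_one_left_eq_Ioc]
      have hmS : m ≤ S k := hm_le k hk1 hkN
      have hmono' : p k ≤ p (k + 1) := hmono k hk1 (by omega)
      have h1 : k - 1 + 1 = k := by omega
      rw [h1] at hSk
      have hfact : (S k - m) * (p (k + 1) - p k) ≥ 0 :=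
        mul_nonneg (by linarith) (by linarith)
      have hgoal : S (k - 1) * p k + m * (p N - p k)
          ≤ c k * p k + (S k * p (k + 1) + m * (p N - p (k + 1))) := by
        rw [hScS]; nlinarith
      calc S (k - 1) * p k + m * (p N - p k)
          ≤ c k * p k + (S k * p (k + 1) + m * (p N - p (k + 1))) := hgoal
        _ ≤ c k * p k + ∑ n ∈ Finset.Icc (k + 1) N, c n * p n := by linarith
  have hk1 : N - (N - 1) = 1 := by omega
  have key1 := key (N - 1) le_rfl
  rw [hk1] at key1
  have hS0 : S (1 - 1) = c 1 + S 1 := by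
    simp only [hSdef]
    rw [Finset.Icc_eq_cons_Ioc (by omega : 1 ≤ N), Finset.sum_cons, Finset.Icc_add_one_left_eq_Ioc]
  have hc1 : c 1 = 1 := by simp [hc, hy1]
  have hmS1 : m ≤ S 1 := hm_le 1 le_rfl (by omega)
  have hS0' : 1 + m ≤ S (1 - 1) := by rw [hS0, hc1]; linarith
  -- conclude: Σ c p ≥ m
  have hsum : m ≤ ∑ n ∈ Finset.Icc 1 N, c n * p n := by
    have h1 : S (1 - 1) * p 1 ≥ (1 + m) * p 1 := by nlinarith
    nlinarith
  rw [hThresh, hE p]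
  linarith
end

section
/- Let p* be a minimizer of the sample-weighted classification error E_{α,β} over all feasible calibrations, and let 0 = n_1 < n_2 < … < n_{I+1} = N be a block decomposition of p* with block values v_1 ≤ … ≤ v_I. Writing Y_i = Σ_{n=n_i+1}^{n_{i+1}} β_n y_n and B_i = Σ_{n=n_i+1}^{n_{i+1}} β_n, for every interior block i ∈ {2,…,I−1}: if Y_i > B_i/(α+1) then v_i = v_{i+1}, and if Y_i < B_i/(α+1) then v_i = v_{i−1}. Moreover v_1 = 0 and v_I = 1. -/
/-- The sample-weighted classification error
`E_{α,β}(p) = Σ_{n=1}^N β_n [α y_n (1 - p_n) + (1 - y_n) p_n]`. -/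
def clErrS (N : ℕ) (α : ℝ) (β y p : ℕ → ℝ) : ℝ :=
  ∑ n ∈ Finset.Icc 1 N, β n * (α * y n * (1 - p n) + (1 - y n) * p n)

lemma errDiff (N : ℕ) (α : ℝ) (β y p q : ℕ → ℝ) :
    clErrS N α β y q - clErrS N α β y p
      = ∑ n ∈ Finset.Icc 1 N, β n * (1 - (α + 1) * y n) * (q n - p n) := by
  unfold clErrS
  rw [← Finset.sum_sub_distrib]
  exact Finset.sum_congr rfl fun n _ => by ring

theorem stmt8 (N : ℕ) (hN : 2 ≤ N) (y : ℕ → ℝ)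
    (hy : ∀ n ∈ Finset.Icc 1 N, y n = 0 ∨ y n = 1)
    (hy1 : y 1 = 0) (hyN : y N = 1)
    (α : ℝ) (hα : 0 < α)
    (β : ℕ → ℝ) (hβ : ∀ n ∈ Finset.Icc 1 N, 0 < β n)
    (p : ℕ → ℝ) (hp : Feasible N p)
    (hmin : ∀ q, Feasible N q → clErrS N α β y p ≤ clErrS N α β y q)
    (I : ℕ) (hI : 1 ≤ I) (nI : ℕ → ℕ) (v : ℕ → ℝ)
    (hblock : BlockDecomp N I p nI v) :
    (∀ i, 2 ≤ i → i ≤ I - 1 →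
      ((∑ n ∈ Finset.Icc (nI i + 1) (nI (i + 1)), β n * y n) >
          (∑ n ∈ Finset.Icc (nI i + 1) (nI (i + 1)), β n) / (α + 1) → v i = v (i + 1)) ∧
      ((∑ n ∈ Finset.Icc (nI i + 1) (nI (i + 1)), β n * y n) <
          (∑ n ∈ Finset.Icc (nI i + 1) (nI (i + 1)), β n) / (α + 1) → v i = v (i - 1))) ∧
    v 1 = 0 ∧ v I = 1 := by
  obtain ⟨hp0, hpN, hpm⟩ := hp
  obtain ⟨ha1, haN, hlt, hconst⟩ := hblock
  -- strict monotonicity of nI on [1, I+1]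
  have hstrict : ∀ k j, 1 ≤ j → j < k → k ≤ I + 1 → nI j < nI k := by
    intro k
    induction k with
    | zero => intro j hj hjk hk; omega
    | succ k ih =>
      intro j hj hjk hk
      rcases Nat.lt_succ_iff_lt_or_eq.mp hjk with h | h
      · exact lt_trans (ih j hj h (by omega)) (hlt k (by omega) (by omega))
      · subst h; exact hlt j hj (by omega)
  -- chained monotonicity of p
  have pmono : ∀ m n, 1 ≤ m → m ≤ n → n ≤ N → p m ≤ p n := by
    intro m n hm hmn hn
    induction n with
    | zero => omega
    | succ n ih =>
      rcases Nat.lt_succ_iff_lt_or_eq.mp (Nat.lt_succ_of_le hmn) with h | h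
      · exact le_trans (ih (by omega) (by omega)) (hpm n (by omega) (by omega))
      · subst h; rfl
  have hp1v : p 1 = v 1 := by
    have h2 : nI 1 < nI (1 + 1) := hstrict 2 1 le_rfl (by omega) (by omega)
    exact hconst 1 le_rfl hI 1 (by omega) (by omega)
  have hpNv : p N = v I := by
    have h2 : nI I < nI (I + 1) := hlt I hI le_rfl
    exact hconst I hI le_rfl N (by omega) (by omega)
  have h1N : (1 : ℕ) ∈ Finset.Icc 1 N := by simp; omega
  have hNN : N ∈ Finset.Icc 1 N := by simp; omega
  have hβ1 := hβ 1 h1N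
  have hβN := hβ N hNN
  -- v 1 = 0
  have hv1 : v 1 = 0 := by
    set q : ℕ → ℝ := fun n => if n = 1 then 0 else p n with hqdef
    have hq1 : q 1 = 0 := by simp [hqdef]
    have hqN : q N = p N := by simp [hqdef]; intro h; omega
    have hqfeas : Feasible N q := by
      refine ⟨le_of_eq hq1.symm, by rw [hqN]; exact hpN, ?_⟩
      intro n hn hnN
      rcases eq_or_lt_of_le hn with h | h
      · have h1 : q (n+1) = p (n+1) := by simp [hqdef]; omega
        rw [← h] at h1 ⊢
        rw [hq1, h1]
        exact le_trans hp0 (hpm 1 le_rfl (by omega))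
      · have h1 : q n = p n := by simp [hqdef]; omega
        have h2 : q (n+1) = p (n+1) := by simp [hqdef]; omega
        rw [h1, h2]; exact hpm n hn hnN
    have hle := hmin q hqfeas
    have hdiff : clErrS N α β y q - clErrS N α β y p = -(β 1 * p 1) := by
      rw [errDiff]
      rw [Finset.sum_eq_single_of_mem 1 h1N]
      · rw [hq1, hy1]; ring
      · intro n _ hn
        have : q n = p n := by simp [hqdef, hn]
        rw [this]; ring
    have : 0 ≤ -(β 1 * p 1) := by linarith
    have hp1 : p 1 ≤ 0 := by nlinarith
    rw [← hp1v]; linarith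
  -- v I = 1
  have hvI : v I = 1 := by
    set q : ℕ → ℝ := fun n => if n = N then 1 else p n with hqdef
    have hqN : q N = 1 := by simp [hqdef]
    have hq1 : q 1 = p 1 := by simp [hqdef]; intro h; omega
    have hqfeas : Feasible N q := by
      refine ⟨by rw [hq1]; exact hp0, le_of_eq hqN, ?_⟩
      intro n hn hnN
      by_cases h : n + 1 = N
      · have h1 : q n = p n := by simp [hqdef]; omega
        rw [h1, h, hqN]
        exact le_trans (pmono n N hn (by omega) le_rfl) hpN
      · have h1 : q n = p n := by simp [hqdef]; omega
        have h2 : q (n+1) = p (n+1) := by simp [hqdef]; omega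
        rw [h1, h2]; exact hpm n hn hnN
    have hle := hmin q hqfeas
    have hdiff : clErrS N α β y q - clErrS N α β y p = -(α * β N * (1 - p N)) := by
      rw [errDiff]
      rw [Finset.sum_eq_single_of_mem N hNN]
      · rw [hqN, hyN]; ring
      · intro n _ hn
        have : q n = p n := by simp [hqdef, hn]
        rw [this]; ring
    have h0 : 0 ≤ -(α * β N * (1 - p N)) := by linarith
    have : 1 ≤ p N := by nlinarith [mul_pos hα hβN]
    rw [← hpNv]; linarith
  refine ⟨?_, hv1, hvI⟩
  intro i hi2 hiI
  obtain ⟨j, rfl⟩ : ∃ j, i = j + 2 := ⟨i - 2, by omega⟩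
  have hjI : j + 3 ≤ I := by omega
  set a := nI (j + 2) with hadef
  set b := nI (j + 3) with hbdef
  have ha1' : 1 ≤ a := by
    have := hstrict (j + 2) 1 le_rfl (by omega) (by omega)
    omega
  have hab : a < b := hlt (j + 2) (by omega) (by omega)
  have hbN : b < N := by
    have := hstrict (I + 1) (j + 3) (by omega) (by omega) le_rfl
    omega
  -- block values
  have hva : p a = v (j + 1) := by
    have h2 : nI (j + 1) < nI (j + 1 + 1) := hlt (j + 1) (by omega) (by omega)
    have h3 : nI (j + 1 + 1) = a := rfl
    exact hconst (j + 1) (by omega) (by omega) a (by omega) (le_refl a)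
  have hvmid : ∀ n, a + 1 ≤ n → n ≤ b → p n = v (j + 2) :=
    fun n h1 h2 => hconst (j + 2) (by omega) (by omega) n h1 h2
  have hvb : p (b + 1) = v (j + 3) := by
    have h2 : nI (j + 3) < nI (j + 3 + 1) := hlt (j + 3) (by omega) hjI
    exact hconst (j + 3) (by omega) hjI (b + 1) le_rfl (by omega)
  have h12 : v (j + 1) ≤ v (j + 2) := by
    rw [← hva, ← hvmid (a + 1) le_rfl hab]
    exact hpm a ha1' (by omega)
  have h23 : v (j + 2) ≤ v (j + 3) := by
    rw [← hvmid b (by omega) le_rfl, ← hvb]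
    exact hpm b (by omega) hbN
  set S : ℝ := ∑ n ∈ Finset.Icc (a + 1) b, β n * (1 - (α + 1) * y n) with hSdef
  have hSval : S = (∑ n ∈ Finset.Icc (a + 1) b, β n)
      - (α + 1) * ∑ n ∈ Finset.Icc (a + 1) b, β n * y n := by
    rw [hSdef, Finset.mul_sum, ← Finset.sum_sub_distrib]
    exact Finset.sum_congr rfl fun n _ => by ring
  have hsub : Finset.Icc (a + 1) b ⊆ Finset.Icc 1 N := by
    intro n hn
    simp only [Finset.mem_Icc] at *
    omega
  have key : ∀ t, v (j + 1) ≤ t → t ≤ v (j + 3) → 0 ≤ S * (t - v (j + 2)) := by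
    intro t ht1 ht2
    set q : ℕ → ℝ := fun n => if a + 1 ≤ n ∧ n ≤ b then t else p n with hqdef
    have hqout : ∀ n, ¬(a + 1 ≤ n ∧ n ≤ b) → q n = p n := by
      intro n h; simp only [hqdef, if_neg h]
    have hqin : ∀ n, a + 1 ≤ n → n ≤ b → q n = t := by
      intro n h1 h2; simp only [hqdef]; exact if_pos ⟨h1, h2⟩
    have hq1 : q 1 = p 1 := hqout 1 (by omega)
    have hqN : q N = p N := hqout N (by omega)
    have hqfeas : Feasible N q := by
      refine ⟨by rw [hq1]; exact hp0, by rw [hqN]; exact hpN, ?_⟩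
      intro n hn hnN
      by_cases hmem : a + 1 ≤ n ∧ n ≤ b
      · by_cases hmem' : n + 1 ≤ b
        · rw [hqin n hmem.1 hmem.2, hqin (n + 1) (by omega) hmem']
        · have hnb : n = b := by omega
          rw [hqin n hmem.1 hmem.2, hqout (n + 1) (by omega), hnb, hvb]
          exact ht2
      · by_cases hmem' : a + 1 ≤ n + 1 ∧ n + 1 ≤ b
        · have hna : n = a := by omega
          rw [hqout n hmem, hqin (n + 1) hmem'.1 hmem'.2, hna, hva]
          exact ht1
        · rw [hqout n hmem, hqout (n + 1) hmem']
          exact hpm n hn hnN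
    have hle := hmin q hqfeas
    have hdiff : clErrS N α β y q - clErrS N α β y p = S * (t - v (j + 2)) := by
      rw [errDiff]
      rw [← Finset.sum_subset hsub (by
        intro n _ hn
        simp only [Finset.mem_Icc] at hn
        rw [hqout n (by omega)]
        ring)]
      rw [hSdef, Finset.sum_mul]
      refine Finset.sum_congr rfl ?_
      intro n hn
      simp only [Finset.mem_Icc] at hn
      rw [hqin n hn.1 hn.2, hvmid n hn.1 hn.2]
    linarith
  have hα1 : (0 : ℝ) < α + 1 := by linarith
  constructor
  · intro hY
    have hS : S < 0 := by
      have hY' : (∑ n ∈ Finset.Icc (a + 1) b, β n) / (α + 1)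
          < ∑ n ∈ Finset.Icc (a + 1) b, β n * y n := hY
      rw [div_lt_iff₀ hα1] at hY'
      rw [hSval]; nlinarith
    have h0 := key (v (j + 3)) (le_trans h12 h23) le_rfl
    have : v (j + 3) - v (j + 2) ≤ 0 := by nlinarith
    show v (j + 2) = v (j + 2 + 1)
    have : v (j + 3) = v (j + 2) := by linarith
    rw [show j + 2 + 1 = j + 3 from rfl, this]
  · intro hY
    have hS : 0 < S := by
      have hY' : (∑ n ∈ Finset.Icc (a + 1) b, β n * y n)
          < (∑ n ∈ Finset.Icc (a + 1) b, β n) / (α + 1) := hY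
      rw [lt_div_iff₀ hα1] at hY'
      rw [hSval]; nlinarith
    have h0 := key (v (j + 1)) le_rfl (le_trans h12 h23)
    have : v (j + 1) - v (j + 2) ≥ 0 := by nlinarith
    show v (j + 2) = v (j + 2 - 1)
    have : v (j + 1) = v (j + 2) := by linarith
    rw [show j + 2 - 1 = j + 1 from rfl, this]
end

section
/- There exists an index τ ∈ {1,…,N−1} such that the hard threshold vector p^τ, defined by p^τ_n = 0 for n ≤ τ and p^τ_n = 1 for n > τ, satisfies E_{α,β}(p^τ) ≤ E_{α,β}(p) for every feasible calibration p. That is, the minimum of the sample-weighted classification error over all monotone calibration maps is attained by a thresholding (hard) mapping. -/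
/-- Telescoping sum of increments. -/
lemma tele_aux (p : ℕ → ℝ) (N : ℕ) (hN : 1 ≤ N) :
    ∑ τ ∈ Finset.Icc 1 (N-1), (p (τ+1) - p τ) = p N - p 1 := by
  have h0 : Finset.Icc 1 (N-1) = Finset.Ico 1 N := by
    rw [← Finset.Ico_add_one_right_eq_Icc]; congr 1; omega
  rw [h0, Finset.sum_Ico_eq_sum_range]
  have h2 := Finset.sum_range_sub (fun i => p (i+1)) (N-1)
  have h3 : N - 1 + 1 = N := by omega
  rw [h3] at h2
  rw [← h2]
  exact Finset.sum_congr rfl (fun i _ => by rw [add_comm 1 i])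

/-- Abel summation with tail sums. -/
lemma abel_aux (c p : ℕ → ℝ) : ∀ N : ℕ, 1 ≤ N →
    ∑ n ∈ Finset.Icc 1 N, c n * p n
      = p 1 * (∑ n ∈ Finset.Icc 1 N, c n)
        + ∑ τ ∈ Finset.Icc 1 (N-1), (∑ n ∈ Finset.Icc (τ+1) N, c n) * (p (τ+1) - p τ) := by
  intro N hN
  induction N, hN using Nat.le_induction with
  | base => simp [mul_comm]
  | succ N hN ih =>
    have eL : ∑ n ∈ Finset.Icc 1 (N+1), c n * p n
        = ∑ n ∈ Finset.Icc 1 N, c n * p n + c (N+1) * p (N+1) :=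
      Finset.sum_Icc_succ_top (by omega) _
    have eC : ∑ n ∈ Finset.Icc 1 (N+1), c n
        = ∑ n ∈ Finset.Icc 1 N, c n + c (N+1) :=
      Finset.sum_Icc_succ_top (by omega) _
    have eT : ∑ τ ∈ Finset.Icc 1 (N+1-1), (∑ n ∈ Finset.Icc (τ+1) (N+1), c n) * (p (τ+1) - p τ)
        = (∑ τ ∈ Finset.Icc 1 (N-1), (∑ n ∈ Finset.Icc (τ+1) N, c n) * (p (τ+1) - p τ)
            + c (N+1) * (p N - p 1)) + c (N+1) * (p (N+1) - p N) := by
      have h1 : N + 1 - 1 = N := by omega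
      have h2 : Finset.Icc 1 N = Finset.Icc 1 ((N-1)+1) := by congr 1; omega
      rw [h1, h2, Finset.sum_Icc_succ_top (by omega)]
      have h3 : N - 1 + 1 = N := by omega
      rw [h3]
      congr 1
      · have h4 : ∀ τ ∈ Finset.Icc 1 (N-1),
            (∑ n ∈ Finset.Icc (τ+1) (N+1), c n) * (p (τ+1) - p τ)
              = (∑ n ∈ Finset.Icc (τ+1) N, c n) * (p (τ+1) - p τ)
                + c (N+1) * (p (τ+1) - p τ) := by
          intro τ hτ
          rw [Finset.sum_Icc_succ_top (by simp at hτ; omega : τ + 1 ≤ N + 1)]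
          ring
        rw [Finset.sum_congr rfl h4, Finset.sum_add_distrib, ← Finset.mul_sum,
            tele_aux p N hN]
      · have h5 : Finset.Icc (N+1) (N+1) = {N+1} := Finset.Icc_self _
        rw [h5, Finset.sum_singleton]
    rw [eL, eC, eT, ih]
    ring

theorem stmt10 (N : ℕ) (hN : 2 ≤ N) (y : ℕ → ℝ)
    (hy : ∀ n ∈ Finset.Icc 1 N, y n = 0 ∨ y n = 1)
    (hy1 : y 1 = 0) (hyN : y N = 1)
    (α : ℝ) (hα : 0 < α)
    (β : ℕ → ℝ) (hβ : ∀ n ∈ Finset.Icc 1 N, 0 < β n) :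
    ∃ τ, 1 ≤ τ ∧ τ ≤ N - 1 ∧
      ∀ p, Feasible N p →
        clErrS N α β y (fun n => if n ≤ τ then (0 : ℝ) else 1) ≤ clErrS N α β y p := by
  set c : ℕ → ℝ := fun n => β n * ((1 - y n) - α * y n) with hc
  set S : ℕ → ℝ := fun τ => ∑ n ∈ Finset.Icc (τ+1) N, c n with hS
  -- decomposition of the error
  have decomp : ∀ p : ℕ → ℝ, clErrS N α β y p
      = (∑ n ∈ Finset.Icc 1 N, β n * (α * y n)) + ∑ n ∈ Finset.Icc 1 N, c n * p n := by
    intro p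
    unfold clErrS
    rw [← Finset.sum_add_distrib]
    exact Finset.sum_congr rfl (fun n _ => by simp only [hc]; ring)
  -- threshold error value
  have thresh : ∀ τ : ℕ, 1 ≤ τ →
      ∑ n ∈ Finset.Icc 1 N, c n * (if n ≤ τ then (0:ℝ) else 1) = S τ := by
    intro τ hτ
    have h1 : ∀ n ∈ Finset.Icc 1 N,
        c n * (if n ≤ τ then (0:ℝ) else 1) = if τ < n then c n else 0 := by
      intro n _
      by_cases h : n ≤ τ
      · rw [if_pos h, if_neg (by omega), mul_zero]
      · rw [if_neg h, if_pos (by omega), mul_one]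
    rw [Finset.sum_congr rfl h1, ← Finset.sum_filter]
    have h2 : (Finset.Icc 1 N).filter (fun n => τ < n) = Finset.Icc (τ+1) N := by
      ext n
      simp only [Finset.mem_filter, Finset.mem_Icc]
      omega
    rw [h2]
  -- choose a minimizer of S over Icc 1 (N-1)
  obtain ⟨τ, hτmem, hτmin⟩ := Finset.exists_min_image (Finset.Icc 1 (N-1)) S
    ⟨1, by simp only [Finset.mem_Icc]; omega⟩
  simp only [Finset.mem_Icc] at hτmem
  refine ⟨τ, hτmem.1, hτmem.2, ?_⟩
  -- S τ is nonpositive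
  have hcN : c N = -(α * β N) := by
    simp only [hc, hyN]; ring
  have hβN : 0 < β N := hβ N (by simp only [Finset.mem_Icc]; omega)
  have hSN1 : S (N-1) = c N := by
    simp only [hS]
    have : N - 1 + 1 = N := by omega
    rw [this, Finset.Icc_self, Finset.sum_singleton]
  have hSτneg : S τ ≤ 0 := by
    have h := hτmin (N-1) (by simp only [Finset.mem_Icc]; omega)
    rw [hSN1, hcN] at h
    nlinarith
  -- S 0 ≥ S τ
  have hS0 : S τ ≤ S 0 := by
    have hc1 : c 1 = β 1 := by simp only [hc, hy1]; ring
    have hβ1 : 0 < β 1 := hβ 1 (by simp only [Finset.mem_Icc]; omega)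
    have h01 : S 0 = c 1 + S 1 := by
      simp only [hS]
      have h2 : Finset.Icc (0+1) N = Finset.Icc 1 ((1-1)+1) ∪ Finset.Icc (1+1) N := by
        ext n; simp only [Finset.mem_union, Finset.mem_Icc]; omega
      rw [h2, Finset.sum_union (by
        simp only [Finset.disjoint_left, Finset.mem_Icc]; omega)]
      simp
    have h1 := hτmin 1 (by simp only [Finset.mem_Icc]; omega)
    rw [h01]
    nlinarith
  -- main inequality
  intro p hp
  obtain ⟨hp0, hp1, hpmono⟩ := hp
  rw [decomp, decomp, thresh τ hτmem.1]
  have habel := abel_aux c p N (by omega)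
  rw [habel]
  -- lower-bound each Abel term by S τ times the increment
  have hstep : ∀ σ ∈ Finset.Icc 1 (N-1),
      S τ * (p (σ+1) - p σ) ≤ (∑ n ∈ Finset.Icc (σ+1) N, c n) * (p (σ+1) - p σ) := by
    intro σ hσ
    simp only [Finset.mem_Icc] at hσ
    have hΔ : 0 ≤ p (σ+1) - p σ := by
      have := hpmono σ hσ.1 (by omega)
      linarith
    have hSσ : S τ ≤ S σ := hτmin σ (by simp only [Finset.mem_Icc]; omega)
    have : S σ = ∑ n ∈ Finset.Icc (σ+1) N, c n := rfl
    nlinarith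
  have hsum := Finset.sum_le_sum hstep
  rw [← Finset.mul_sum, tele_aux p N (by omega)] at hsum
  have hS0' : p 1 * S τ ≤ p 1 * S 0 := by nlinarith
  have hS0eq : S 0 = ∑ n ∈ Finset.Icc 1 N, c n := by
    simp only [hS]
  have hfinal : S τ * p N ≥ S τ := by nlinarith
  rw [← hS0eq]
  nlinarith
end

section
/- Let q* be a minimizer of the linear loss L over all feasible vectors. Then q*_1 = Q_0, q*_N = Q_1, and for every index n with 2 ≤ n ≤ N−1: if z_n < 0 then q*_n = q*_{n+1}, and if z_n > 0 then q*_n = q*_{n−1}. -/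
/-- A feasible vector: a nondecreasing vector `q 1, …, q N` with values in `[Q₀, Q₁]`. -/
def FeasibleQ (N : ℕ) (Q0 Q1 : ℝ) (q : ℕ → ℝ) : Prop :=
  Q0 ≤ q 1 ∧ q N ≤ Q1 ∧ ∀ n, 1 ≤ n → n < N → q n ≤ q (n + 1)

/-- The linear loss `L(q) = Σ_{n=1}^N z_n q_n`. -/
def linLoss (N : ℕ) (z q : ℕ → ℝ) : ℝ :=
  ∑ n ∈ Finset.Icc 1 N, z n * q n

lemma loss_update (N n : ℕ) (hn : n ∈ Finset.Icc 1 N) (z q : ℕ → ℝ) (v : ℝ) :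
    linLoss N z (Function.update q n v) = linLoss N z q + z n * (v - q n) := by
  unfold linLoss
  rw [← Finset.sum_erase_add _ _ hn, ← Finset.sum_erase_add _ (fun m => z m * q m) hn]
  have h : ∀ m ∈ (Finset.Icc 1 N).erase n,
      z m * Function.update q n v m = z m * q m := by
    intro m hm; rw [Function.update_of_ne (Finset.ne_of_mem_erase hm)]
  rw [Finset.sum_congr rfl h, Function.update_self]; ring

theorem stmt12 (N : ℕ) (hN : 2 ≤ N) (Q0 Q1 : ℝ) (hQ : Q0 ≤ Q1)
    (z : ℕ → ℝ) (hz1 : 0 < z 1) (hzN : z N < 0)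
    (q : ℕ → ℝ) (hq : FeasibleQ N Q0 Q1 q)
    (hmin : ∀ r, FeasibleQ N Q0 Q1 r → linLoss N z q ≤ linLoss N z r) :
    q 1 = Q0 ∧ q N = Q1 ∧
      ∀ n, 2 ≤ n → n ≤ N - 1 →
        (z n < 0 → q n = q (n + 1)) ∧ (z n > 0 → q n = q (n - 1)) := by
  obtain ⟨h0, h1, hmono⟩ := hq
  -- general perturbation lemma
  have key : ∀ n, 1 ≤ n → n ≤ N → ∀ v : ℝ,
      FeasibleQ N Q0 Q1 (Function.update q n v) → 0 ≤ z n * (v - q n) := by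
    intro n hn1 hnN v hr
    have hmem : n ∈ Finset.Icc 1 N := Finset.mem_Icc.mpr ⟨hn1, hnN⟩
    have := hmin _ hr
    rw [loss_update N n hmem z q v] at this
    linarith
  refine ⟨?_, ?_, ?_⟩
  · -- q 1 = Q0
    have hfeas : FeasibleQ N Q0 Q1 (Function.update q 1 Q0) := by
      refine ⟨by rw [Function.update_self], ?_, ?_⟩
      · rw [Function.update_of_ne (by omega)]; exact h1
      · intro m hm1 hmN
        rcases eq_or_ne m 1 with rfl | hne
        · rw [Function.update_self, Function.update_of_ne (by omega)]
          exact le_trans h0 (hmono 1 le_rfl hmN)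
        · rw [Function.update_of_ne hne, Function.update_of_ne (by omega)]
          exact hmono m hm1 hmN
    have hk := key 1 le_rfl (by omega) Q0 hfeas
    nlinarith
  · -- q N = Q1
    have hfeas : FeasibleQ N Q0 Q1 (Function.update q N Q1) := by
      refine ⟨by rw [Function.update_of_ne (by omega)]; exact h0,
        by rw [Function.update_self], ?_⟩
      intro m hm1 hmN
      rcases eq_or_ne (m + 1) N with he | hne
      · rw [Function.update_of_ne (by omega), he, Function.update_self]
        exact le_trans (hmono m hm1 hmN) (he ▸ h1)
      · rw [Function.update_of_ne (by omega), Function.update_of_ne hne]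
        exact hmono m hm1 hmN
    have hk := key N (by omega) le_rfl Q1 hfeas
    nlinarith
  · intro n hn2 hnN1
    have hnN : n < N := by omega
    constructor
    · intro hzn
      have hfeas : FeasibleQ N Q0 Q1 (Function.update q n (q (n + 1))) := by
        refine ⟨by rw [Function.update_of_ne (by omega)]; exact h0,
          by rw [Function.update_of_ne (by omega)]; exact h1, ?_⟩
        intro m hm1 hmN
        rcases eq_or_ne m n with rfl | hne
        · rw [Function.update_self, Function.update_of_ne (by omega)]
        · rcases eq_or_ne (m + 1) n with he | hne2
          · rw [Function.update_of_ne hne, he, Function.update_self]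
            calc q m ≤ q (m + 1) := hmono m hm1 hmN
              _ ≤ q (m + 1 + 1) := hmono (m + 1) (by omega) (by omega)
              _ = q (n + 1) := by rw [he]
          · rw [Function.update_of_ne hne, Function.update_of_ne hne2]
            exact hmono m hm1 hmN
      have hk := key n (by omega) (by omega) (q (n + 1)) hfeas
      have hle := hmono n (by omega) hnN
      nlinarith
    · intro hzn
      have hprev : q (n - 1) ≤ q n := by
        have := hmono (n - 1) (by omega) (by omega)
        have he : n - 1 + 1 = n := by omega
        rwa [he] at this
      have hfeas : FeasibleQ N Q0 Q1 (Function.update q n (q (n - 1))) := by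
        refine ⟨by rw [Function.update_of_ne (by omega)]; exact h0,
          by rw [Function.update_of_ne (by omega)]; exact h1, ?_⟩
        intro m hm1 hmN
        rcases eq_or_ne m n with rfl | hne
        · rw [Function.update_self, Function.update_of_ne (by omega)]
          exact le_trans hprev (hmono m (by omega) (by omega))
        · rcases eq_or_ne (m + 1) n with he | hne2
          · rw [Function.update_of_ne hne, he, Function.update_self]
            have : m = n - 1 := by omega
            rw [this]
          · rw [Function.update_of_ne hne, Function.update_of_ne hne2]
            exact hmono m hm1 hmN
      have hk := key n (by omega) (by omega) (q (n - 1)) hfeas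
      nlinarith
end

section
/- There exists an index τ ∈ {1,…,N−1} such that the hard threshold vector q^τ, defined by q^τ_n = Q_0 for n ≤ τ and q^τ_n = Q_1 for n > τ, satisfies L(q^τ) ≤ L(q) for every feasible vector q. That is, the minimum of the linear loss over all monotone transforms into [Q_0, Q_1] is attained by a thresholding (hard) mapping. -/
open Finset in
lemma swap_icc (b : ℕ) (f g : ℕ → ℝ) :
    ∑ n ∈ Icc 1 b, f n * ∑ k ∈ Icc 1 n, g k
      = ∑ k ∈ Icc 1 b, g k * ∑ n ∈ Icc k b, f n := by
  simp_rw [Finset.mul_sum]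
  rw [Finset.sum_comm' (t' := Icc 1 b) (s' := fun k => Icc k b)
    (by intro n k; simp only [mem_Icc]; omega)]
  simp_rw [mul_comm]


open Finset in
theorem stmt15 (N : ℕ) (hN : 2 ≤ N) (Q0 Q1 : ℝ) (hQ : Q0 ≤ Q1)
    (z : ℕ → ℝ) (hz1 : 0 < z 1) (hzN : z N < 0) :
    ∃ τ, 1 ≤ τ ∧ τ ≤ N - 1 ∧
      ∀ q, FeasibleQ N Q0 Q1 q →
        linLoss N z (fun n => if n ≤ τ then Q0 else Q1) ≤ linLoss N z q := by
  set T : ℕ → ℝ := fun j => ∑ k ∈ Icc j N, z k with hT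
  obtain ⟨j, hjmem, hjmin⟩ := Finset.exists_min_image (Icc 2 N) T
    ⟨2, by simp [mem_Icc]; omega⟩
  simp only [mem_Icc] at hjmem
  obtain ⟨hj2, hjN⟩ := hjmem
  set τ := j - 1 with hτ
  have hτj : τ + 1 = j := by omega
  have hT1 : T 1 = z 1 + T 2 := by
    have h1 : Icc 1 N = insert 1 (Icc 2 N) := by ext x; simp [mem_Icc]; omega
    show ∑ k ∈ Icc 1 N, z k = z 1 + ∑ k ∈ Icc 2 N, z k
    rw [h1, Finset.sum_insert (by simp only [mem_Icc]; omega)]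
  have hTN : T N = z N := by simp [hT]
  have hTjneg : T j < 0 := by
    have := hjmin N (by simp [mem_Icc]; omega)
    rw [hTN] at this; linarith
  have hTmin : ∀ k, 1 ≤ k → k ≤ N → T j ≤ T k := by
    intro k hk1 hkN
    rcases Nat.lt_or_ge k 2 with hk | hk
    · have hk1' : k = 1 := by omega
      have := hjmin 2 (by simp [mem_Icc]; omega)
      rw [hk1', hT1]; linarith
    · exact hjmin k (by simp [mem_Icc]; omega)
  have hsplit : ∀ f : ℕ → ℝ, ∑ n ∈ Icc 1 τ, f n + ∑ n ∈ Icc j N, f n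
      = ∑ n ∈ Icc 1 N, f n := by
    intro f
    have e1 : Icc 1 τ = Ioc 0 τ := by ext x; simp [mem_Icc, mem_Ioc]; omega
    have e2 : Icc 1 N = Ioc 0 N := by ext x; simp [mem_Icc, mem_Ioc]; omega
    have e3 : Icc j N = Ioc τ N := by ext x; simp [mem_Icc, mem_Ioc]; omega
    rw [e1, e2, e3]
    exact Finset.sum_Ioc_consecutive f (by omega) (by omega)
  refine ⟨τ, by omega, by omega, ?_⟩
  rintro q ⟨hq0, hq1, hmono⟩
  -- value of the threshold vector
  have hLτ : linLoss N z (fun n => if n ≤ τ then Q0 else Q1)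
      = Q0 * T 1 + (Q1 - Q0) * T j := by
    have h1 : ∑ n ∈ Icc 1 τ, z n * (if n ≤ τ then Q0 else Q1)
        = Q0 * ∑ n ∈ Icc 1 τ, z n := by
      rw [Finset.mul_sum]
      refine Finset.sum_congr rfl fun n hn => ?_
      simp only [mem_Icc] at hn
      rw [if_pos hn.2, mul_comm]
    have h2 : ∑ n ∈ Icc j N, z n * (if n ≤ τ then Q0 else Q1)
        = Q1 * T j := by
      rw [hT, Finset.mul_sum]
      refine Finset.sum_congr rfl fun n hn => ?_
      simp only [mem_Icc] at hn
      rw [if_neg (by omega), mul_comm]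
    have h3 : ∑ n ∈ Icc 1 τ, z n + T j = T 1 := hsplit z
    rw [linLoss, ← hsplit (fun n => z n * (if n ≤ τ then Q0 else Q1)), h1, h2]
    rw [← h3]; ring
  -- increments of q
  set d : ℕ → ℝ := fun k => if k = 1 then q 1 - Q0 else q k - q (k - 1) with hd
  have htel : ∀ n, 1 ≤ n → n ≤ N → ∑ k ∈ Icc 1 n, d k = q n - Q0 := by
    intro n hn1 hnN
    induction n, hn1 using Nat.le_induction with
    | base => simp [hd]
    | succ n hn ih =>
      rw [Finset.sum_Icc_succ_top (by omega), ih (by omega)]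
      have : d (n + 1) = q (n + 1) - q n := by
        simp only [hd]; rw [if_neg (by omega)]; simp
      rw [this]; ring
  have hdnn : ∀ k, 1 ≤ k → k ≤ N → 0 ≤ d k := by
    intro k hk1 hkN
    rcases Nat.lt_or_ge k 2 with hk | hk
    · have : k = 1 := by omega
      simp [hd, this]; linarith
    · have := hmono (k - 1) (by omega) (by omega)
      have hk1' : k - 1 + 1 = k := by omega
      rw [hk1'] at this
      simp only [hd]; rw [if_neg (by omega)]; linarith
  -- Abel identity for q
  have hLq : linLoss N z q = Q0 * T 1 + ∑ k ∈ Icc 1 N, d k * T k := by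
    have : linLoss N z q
        = ∑ n ∈ Icc 1 N, (z n * Q0 + z n * (q n - Q0)) := by
      rw [linLoss]; refine Finset.sum_congr rfl fun n hn => ?_; ring
    rw [this, Finset.sum_add_distrib]
    congr 1
    · simp only [hT]
      rw [Finset.mul_sum]
      exact Finset.sum_congr rfl fun n _ => mul_comm _ _
    · rw [show ∑ n ∈ Icc 1 N, z n * (q n - Q0)
          = ∑ n ∈ Icc 1 N, z n * ∑ k ∈ Icc 1 n, d k from
        Finset.sum_congr rfl fun n hn => by
          simp only [mem_Icc] at hn
          rw [htel n hn.1 hn.2]]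
      exact swap_icc N z d
  -- the comparison
  rw [hLτ, hLq]
  have key1 : ∑ k ∈ Icc 1 N, d k * T j ≤ ∑ k ∈ Icc 1 N, d k * T k := by
    refine Finset.sum_le_sum fun k hk => ?_
    simp only [mem_Icc] at hk
    exact mul_le_mul_of_nonneg_left (hTmin k hk.1 hk.2) (hdnn k hk.1 hk.2)
  have key2 : ∑ k ∈ Icc 1 N, d k * T j = (q N - Q0) * T j := by
    rw [← Finset.sum_mul, htel N (by omega) le_rfl]
  have key3 : (Q1 - Q0) * T j ≤ (q N - Q0) * T j :=
    mul_le_mul_of_nonpos_right (by linarith) (le_of_lt hTjneg)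
  linarith
end

section
/- Let z⁰ = (z⁰_1,…,z⁰_m) and z¹ = (z¹_1,…,z¹_n) be two real sequences (the loss weights of two adjacent sample sets), and let z = z⁰ ⧺ z¹ be their concatenation of length m+n. Suppose k₀ ∈ {0,…,m} minimizes the split loss L(z⁰, ·) over {0,…,m}, and k₁ ∈ {0,…,n} minimizes L(z¹, ·) over {0,…,n}. Set L₀⁰ = S(z⁰, k₀), L₁⁰ = S(z⁰, m) − L₀⁰, L₀¹ = S(z¹, k₁), L₁¹ = S(z¹, n) − L₀¹. Then: if L₁⁰ + L₀¹ < 0, the index k₀ minimizes L(z, ·) over {0,…,m+n}, and the merged optimal split has cumulative losses (L₀⁰, L₁⁰ + L₀¹ + L₁¹); if L₁⁰ + L₀¹ > 0, the index m + k₁ minimizes L(z, ·) over {0,…,m+n}, and the merged optimal split has cumulative losses (L₀⁰ + L₁⁰ + L₀¹, L₁¹). -/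
/-- Prefix sum `S(w, k) = Σ_{i=1}^k w_i`. -/
def prefixSum (w : ℕ → ℝ) (k : ℕ) : ℝ :=
  ∑ i ∈ Finset.Icc 1 k, w i

/-- Split loss of a sequence `w` of length `m` at index `k`:
the first `k` entries are mapped to `Q0` and the remaining `m - k` entries to `Q1`,
giving `L(w, k) = Q0 · S(w,k) + Q1 · (S(w,m) − S(w,k))`. -/
def splitLoss (Q0 Q1 : ℝ) (w : ℕ → ℝ) (m k : ℕ) : ℝ :=
  Q0 * prefixSum w k + Q1 * (prefixSum w m - prefixSum w k)

lemma prefixSum_congr (w w' : ℕ → ℝ) (k : ℕ)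
    (h : ∀ i, 1 ≤ i → i ≤ k → w i = w' i) :
    prefixSum w k = prefixSum w' k := by
  unfold prefixSum
  apply Finset.sum_congr rfl
  intro i hi
  simp only [Finset.mem_Icc] at hi
  exact h i hi.1 hi.2

theorem stmt16 (Q0 Q1 : ℝ) (hQ : Q0 < Q1)
    (m n : ℕ) (z0 z1 z : ℕ → ℝ)
    (hz : ∀ i, 1 ≤ i → i ≤ m + n → z i = if i ≤ m then z0 i else z1 (i - m))
    (k0 : ℕ) (hk0 : k0 ≤ m)
    (hk0min : ∀ k, k ≤ m → splitLoss Q0 Q1 z0 m k0 ≤ splitLoss Q0 Q1 z0 m k)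
    (k1 : ℕ) (hk1 : k1 ≤ n)
    (hk1min : ∀ k, k ≤ n → splitLoss Q0 Q1 z1 n k1 ≤ splitLoss Q0 Q1 z1 n k)
    (L00 L10 L01 L11 : ℝ)
    (hL00 : L00 = prefixSum z0 k0) (hL10 : L10 = prefixSum z0 m - L00)
    (hL01 : L01 = prefixSum z1 k1) (hL11 : L11 = prefixSum z1 n - L01) :
    (L10 + L01 < 0 →
      (∀ k, k ≤ m + n → splitLoss Q0 Q1 z (m + n) k0 ≤ splitLoss Q0 Q1 z (m + n) k) ∧
      prefixSum z k0 = L00 ∧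
      prefixSum z (m + n) - prefixSum z k0 = L10 + L01 + L11) ∧
    (L10 + L01 > 0 →
      (∀ k, k ≤ m + n →
        splitLoss Q0 Q1 z (m + n) (m + k1) ≤ splitLoss Q0 Q1 z (m + n) k) ∧
      prefixSum z (m + k1) = L00 + L10 + L01 ∧
      prefixSum z (m + n) - prefixSum z (m + k1) = L11) := by
  -- prefix sums of z
  have hlow : ∀ k, k ≤ m → prefixSum z k = prefixSum z0 k := by
    intro k hkm
    apply prefixSum_congr
    intro i hi1 hik
    rw [hz i hi1 (le_trans (le_trans hik hkm) (Nat.le_add_right m n))]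
    simp [le_trans hik hkm]
  have hhigh : ∀ j, j ≤ n → prefixSum z (m + j) = prefixSum z0 m + prefixSum z1 j := by
    intro j hj
    induction j with
    | zero =>
      simp only [Nat.add_zero]
      rw [hlow m le_rfl]
      simp [prefixSum]
    | succ j ih =>
      have hj' : j ≤ n := Nat.le_of_succ_le hj
      have h1 : (1:ℕ) ≤ m + (j + 1) := by omega
      have h2 : (1:ℕ) ≤ j + 1 := by omega
      unfold prefixSum
      rw [show m + (j+1) = (m + j) + 1 by ring, Finset.sum_Icc_succ_top (by omega),
        Finset.sum_Icc_succ_top h2]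
      have := ih hj'
      unfold prefixSum at this
      rw [this]
      have : z (m + j + 1) = z1 (j + 1) := by
        rw [hz (m + j + 1) (by omega) (by omega)]
        simp only [if_neg (by omega : ¬ m + j + 1 ≤ m)]
        congr 1
        omega
      rw [this]
      ring
  -- minimality means maximal prefix sum
  have hmax0 : ∀ k, k ≤ m → prefixSum z0 k ≤ prefixSum z0 k0 := by
    intro k hk
    have := hk0min k hk
    unfold splitLoss at this
    nlinarith
  have hmax1 : ∀ k, k ≤ n → prefixSum z1 k ≤ prefixSum z1 k1 := by
    intro k hk
    have := hk1min k hk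
    unfold splitLoss at this
    nlinarith
  have hPk0 : prefixSum z k0 = prefixSum z0 k0 := hlow k0 hk0
  have hPmk1 : prefixSum z (m + k1) = prefixSum z0 m + prefixSum z1 k1 := hhigh k1 hk1
  have hPmn : prefixSum z (m + n) = prefixSum z0 m + prefixSum z1 n := hhigh n le_rfl
  have key : ∀ k, k ≤ m + n →
      prefixSum z k ≤ max (prefixSum z0 k0) (prefixSum z0 m + prefixSum z1 k1) := by
    intro k hk
    rcases le_or_gt k m with h | h
    · rw [hlow k h]
      exact le_max_of_le_left (hmax0 k h)
    · have : k = m + (k - m) := by omega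
      rw [this, hhigh (k - m) (by omega)]
      exact le_max_of_le_right (by linarith [hmax1 (k - m) (by omega)])
  constructor
  · intro hneg
    have hlt : prefixSum z0 m + prefixSum z1 k1 ≤ prefixSum z0 k0 := by
      rw [hL10, hL01, hL00] at hneg; linarith
    refine ⟨?_, ?_, ?_⟩
    · intro k hk
      have hP : prefixSum z k ≤ prefixSum z k0 := by
        rw [hPk0]
        have := key k hk
        rw [max_eq_left hlt] at this
        exact this
      unfold splitLoss
      nlinarith
    · rw [hPk0, hL00]
    · rw [hPmn, hPk0]; linarith
  · intro hpos
    have hlt : prefixSum z0 k0 ≤ prefixSum z0 m + prefixSum z1 k1 := by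
      rw [hL10, hL01, hL00] at hpos; linarith
    refine ⟨?_, ?_, ?_⟩
    · intro k hk
      have hP : prefixSum z k ≤ prefixSum z (m + k1) := by
        rw [hPmk1]
        have := key k hk
        rw [max_eq_right hlt] at this
        exact this
      unfold splitLoss
      nlinarith
    · rw [hPmk1]; linarith
    · rw [hPmn, hPmk1]; linarith
end
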